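/- arXiv:1305.0127 — 6 statements merged into one kernel-verified Lean document; each statement's English description precedes it below -/
import Mathlib

section
/- Let S be a factorial set of words over an alphabet A with k+1 = Card(S ∩ A) letters occurring in S. If S is neutral (every word w ∈ S satisfies e(w) − ℓ(w) − r(w) + 1 = 0), then for all n ≥ 0 the first difference of the complexity satisfies p_{n+1} − p_n = k, where p_n = Card(S ∩ A^n). -/
/-! Since `S` is factorial, deleting the last letter, the first letter, or both end letters maps
the words of `S` of length `n + 1`, `n + 1`, `n + 2` onto those of length `n`, with fibre over
`u` of size `r(u)`, `ℓ(u)`, `e(u)` respectively. Summing `m(u)` over the words of length `n`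
therefore gives the second difference `p (n + 2) - 2 p (n + 1) + p n` of the complexity, which
vanishes when `S` is neutral; so the first difference is constant, equal to
`p 1 - p 0 = (k + 1) - 1`. -/

namespace Paper

variable {A : Type*}

/-- A set of words is factorial if it contains all factors of its elements. -/
def Factorial (S : Set (List A)) : Prop := ∀ w ∈ S, ∀ u : List A, u <:+: w → u ∈ S

def Lext (S : Set (List A)) (w : List A) : Set A := {a | a :: w ∈ S}
def Rext (S : Set (List A)) (w : List A) : Set A := {a | w ++ [a] ∈ S}
def Eext (S : Set (List A)) (w : List A) : Set (A × A) := {p | p.1 :: (w ++ [p.2]) ∈ S}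

def ExtVertex (S : Set (List A)) (w : List A) :=
  {v : A ⊕ A // Sum.elim (fun a => a ∈ Lext S w) (fun b => b ∈ Rext S w) v}

/-- The extension graph of `w` in `S`. -/
def extGraph (S : Set (List A)) (w : List A) : SimpleGraph (ExtVertex S w) where
  Adj u v := (∃ a b, u.1 = Sum.inl a ∧ v.1 = Sum.inr b ∧ (a, b) ∈ Eext S w) ∨
             (∃ a b, u.1 = Sum.inr b ∧ v.1 = Sum.inl a ∧ (a, b) ∈ Eext S w)
  symm := by
    constructor
    rintro u v (⟨a, b, h1, h2, h3⟩ | ⟨a, b, h1, h2, h3⟩)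
    · exact Or.inr ⟨a, b, h2, h1, h3⟩
    · exact Or.inl ⟨a, b, h2, h1, h3⟩
  loopless := by
    constructor
    rintro u (⟨a, b, h1, h2, _⟩ | ⟨a, b, h1, h2, _⟩) <;> rw [h1] at h2 <;> simp at h2

def IsPrefixCode (X : Set (List A)) : Prop :=
  (∀ x ∈ X, x ≠ []) ∧ ∀ x ∈ X, ∀ y ∈ X, x <+: y → x = y

def IsSuffixCode (X : Set (List A)) : Prop :=
  (∀ x ∈ X, x ≠ []) ∧ ∀ x ∈ X, ∀ y ∈ X, x <:+ y → x = y

def IsBifixCode (X : Set (List A)) : Prop := IsPrefixCode X ∧ IsSuffixCode X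

/-- The submonoid `X*` generated by a set of words. -/
def starOf (X : Set (List A)) : Set (List A) :=
  {m | ∃ ls : List (List A), (∀ u ∈ ls, u ∈ X) ∧ m = ls.flatten}

/-- A parse of `w` with respect to `X` : `w = v ++ x ++ u`, `v` has no suffix in `X`,
`x ∈ X*`, `u` has no prefix in `X`. -/
def IsParse (X : Set (List A)) (w : List A) (p : List A × List A × List A) : Prop :=
  w = p.1 ++ p.2.1 ++ p.2.2 ∧ (∀ s, s <:+ p.1 → s ∉ X) ∧ p.2.1 ∈ starOf X ∧
    (∀ t, t <+: p.2.2 → t ∉ X)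

noncomputable def parseCount (X : Set (List A)) (w : List A) : ℕ :=
  {p : List A × List A × List A | IsParse X w p}.ncard

/-- `X` has `S`-degree `d`. -/
def SDegreeIs (S X : Set (List A)) (d : ℕ) : Prop :=
  (∀ w ∈ S, parseCount X w ≤ d) ∧ ∃ w ∈ S, parseCount X w = d

def IsSMaximalBifixCode (S X : Set (List A)) : Prop :=
  IsBifixCode X ∧ X ⊆ S ∧ ∀ Y : Set (List A), IsBifixCode Y → Y ⊆ S → X ⊆ Y → Y = X

def Recurrent (S : Set (List A)) : Prop :=
  Factorial S ∧ S ≠ {[]} ∧ S.Nonempty ∧ ∀ u ∈ S, ∀ w ∈ S, ∃ v, u ++ v ++ w ∈ S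

def UniformlyRecurrent (S : Set (List A)) : Prop :=
  Factorial S ∧ (∀ w ∈ S, ∃ a : A, w ++ [a] ∈ S) ∧
    ∀ u ∈ S, ∃ n : ℕ, ∀ w ∈ S, w.length = n → u <:+: w

/-- The element of the free group corresponding to a word. -/
def toFG (w : List A) : FreeGroup A := (w.map FreeGroup.of).prod

/-- `T` is a basis of the subgroup `H` of the free group on `A`. -/
def IsBasisOf (T : Set (FreeGroup A)) (H : Subgroup (FreeGroup A)) : Prop :=
  Function.Injective (FreeGroup.lift (Subtype.val : T → FreeGroup A)) ∧
  (FreeGroup.lift (Subtype.val : T → FreeGroup A)).range = H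


lemma ncard_biUnion_image {ι γ α : Type*} [Finite γ] {t : Set ι} (ht : t.Finite)
    (E : ι → Set γ) {g : ι → γ → α} (hg : Function.Injective (Function.uncurry g)) :
    (⋃ i ∈ t, g i '' E i).ncard = ∑ᶠ i ∈ t, (E i).ncard := by
  have hinj (i : ι) : Function.Injective (g i) := fun a b h =>
    congrArg Prod.snd (@hg (i, a) (i, b) h)
  rw [ht.ncard_biUnion (fun i _ => (E i).toFinite.image _)]
  · exact finsum_mem_congr rfl fun i _ => Set.ncard_image_of_injective _ (hinj i)
  · rintro i - j - hij
    refine Set.disjoint_left.mpr ?_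
    rintro _ ⟨a, -, rfl⟩ ⟨b, -, hb⟩
    exact hij (congrArg Prod.fst (@hg (j, b) (i, a) hb)).symm

section Complexity

variable (S : Set (List A))

def level (n : ℕ) : Set (List A) := {w ∈ S | w.length = n}

noncomputable def multiplicity (w : List A) : ℤ :=
  (Eext S w).ncard - (Lext S w).ncard - (Rext S w).ncard + 1

lemma finite_level [Finite A] (n : ℕ) : (level S n).Finite :=
  (List.finite_length_eq A n).subset fun _ hw => hw.2

lemma level_zero (hnil : [] ∈ S) : level S 0 = {[]} := by
  ext w
  simp only [level, Set.mem_ofPred_eq, List.length_eq_zero_iff, Set.mem_singleton_iff]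
  exact ⟨And.right, fun h => ⟨h ▸ hnil, h⟩⟩

lemma level_one : level S 1 = (fun a => [a]) '' {a | [a] ∈ S} := by
  ext w
  simp only [level, Set.mem_ofPred_eq, List.length_eq_one_iff, Set.mem_image]
  constructor
  · rintro ⟨hw, a, rfl⟩
    exact ⟨a, hw, rfl⟩
  · rintro ⟨a, ha, rfl⟩
    exact ⟨ha, a, rfl⟩

lemma level_succ_eq_biUnion_rext (hfac : Factorial S) (n : ℕ) :
    level S (n + 1) = ⋃ u ∈ level S n, (fun a => u ++ [a]) '' Rext S u := by
  ext w
  simp only [level, Rext, Set.mem_ofPred_eq, Set.mem_iUnion, Set.mem_image, exists_prop]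
  constructor
  · rintro ⟨hw, hlen⟩
    obtain rfl | ⟨u, a, rfl⟩ := w.eq_nil_or_concat
    · simp at hlen
    · rw [List.concat_eq_append] at hw hlen ⊢
      exact ⟨u, ⟨hfac _ hw u (List.prefix_append u [a]).isInfix, by simpa using hlen⟩,
        a, hw, rfl⟩
  · rintro ⟨u, ⟨-, rfl⟩, a, ha, rfl⟩
    exact ⟨ha, by simp⟩

lemma level_succ_eq_biUnion_lext (hfac : Factorial S) (n : ℕ) :
    level S (n + 1) = ⋃ u ∈ level S n, (fun a => a :: u) '' Lext S u := by
  ext w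
  simp only [level, Lext, Set.mem_ofPred_eq, Set.mem_iUnion, Set.mem_image, exists_prop]
  constructor
  · rintro ⟨hw, hlen⟩
    obtain ⟨a, u, rfl⟩ := List.exists_cons_of_length_eq_add_one hlen
    exact ⟨u, ⟨hfac _ hw u (List.suffix_cons a u).isInfix, by simpa using hlen⟩, a, hw, rfl⟩
  · rintro ⟨u, ⟨-, rfl⟩, a, ha, rfl⟩
    exact ⟨ha, by simp⟩

lemma level_add_two_eq_biUnion_eext (hfac : Factorial S) (n : ℕ) :
    level S (n + 2) =
      ⋃ u ∈ level S n, (fun p : A × A => p.1 :: (u ++ [p.2])) '' Eext S u := by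
  ext w
  simp only [level, Eext, Set.mem_ofPred_eq, Set.mem_iUnion, Set.mem_image, exists_prop,
    Prod.exists]
  constructor
  · rintro ⟨hw, hlen⟩
    obtain ⟨a, v, rfl⟩ := List.exists_cons_of_length_eq_add_one hlen
    obtain rfl | ⟨u, b, rfl⟩ := v.eq_nil_or_concat
    · simp at hlen
    · rw [List.concat_eq_append] at hw hlen ⊢
      have hu : u <:+: a :: (u ++ [b]) :=
        (List.prefix_append u [b]).isInfix.trans (List.suffix_cons a _).isInfix
      exact ⟨u, ⟨hfac _ hw u hu, by simpa using hlen⟩, a, b, hw, rfl⟩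
  · rintro ⟨u, ⟨-, rfl⟩, a, b, hab, rfl⟩
    exact ⟨hab, by simp⟩

variable [Finite A]

lemma ncard_level_succ_eq_finsum_rext (hfac : Factorial S) (n : ℕ) :
    (level S (n + 1)).ncard = ∑ᶠ u ∈ level S n, (Rext S u).ncard := by
  rw [level_succ_eq_biUnion_rext S hfac, ncard_biUnion_image (finite_level S n)]
  rintro ⟨u, a⟩ ⟨v, b⟩ h
  simp_all

lemma ncard_level_succ_eq_finsum_lext (hfac : Factorial S) (n : ℕ) :
    (level S (n + 1)).ncard = ∑ᶠ u ∈ level S n, (Lext S u).ncard := by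
  rw [level_succ_eq_biUnion_lext S hfac, ncard_biUnion_image (finite_level S n)]
  rintro ⟨u, a⟩ ⟨v, b⟩ h
  simp_all

lemma ncard_level_add_two_eq_finsum_eext (hfac : Factorial S) (n : ℕ) :
    (level S (n + 2)).ncard = ∑ᶠ u ∈ level S n, (Eext S u).ncard := by
  rw [level_add_two_eq_biUnion_eext S hfac, ncard_biUnion_image (finite_level S n)]
  rintro ⟨u, a, b⟩ ⟨v, c, d⟩ h
  simp_all

lemma finsum_multiplicity_level (hfac : Factorial S) (n : ℕ) :
    ∑ᶠ u ∈ level S n, multiplicity S u =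
      (level S (n + 2)).ncard - 2 * (level S (n + 1)).ncard + (level S n).ncard := by
  have hfin := finite_level S n
  have hcast (f : List A → ℕ) :
      ∑ᶠ u ∈ level S n, (f u : ℤ) = ((∑ᶠ u ∈ level S n, f u : ℕ) : ℤ) :=
    (Nat.cast_finsum_mem hfin f).symm
  have hone : ∑ᶠ u ∈ level S n, (1 : ℤ) = (level S n).ncard := by
    rw [← finsum_one, Nat.cast_finsum_mem hfin, Nat.cast_one]
  simp only [multiplicity]
  rw [finsum_mem_add_distrib hfin, finsum_mem_sub_distrib _ _ hfin,
    finsum_mem_sub_distrib _ _ hfin, hcast, hcast, hcast, hone,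
    ← ncard_level_add_two_eq_finsum_eext S hfac, ← ncard_level_succ_eq_finsum_lext S hfac,
    ← ncard_level_succ_eq_finsum_rext S hfac]
  ring

end Complexity

/-- In a neutral factorial set over `k + 1` letters, the first difference
of the complexity is constantly `k` : `p (n+1) = p n + k`. -/
theorem neutral_first_difference {A : Type*} [Fintype A] (S : Set (List A)) (k : ℕ)
    (hfac : Factorial S) (hk : {a : A | [a] ∈ S}.ncard = k + 1)
    (hneutral : ∀ w ∈ S,
      ((Eext S w).ncard : ℤ) = (Lext S w).ncard + (Rext S w).ncard - 1) :
    ∀ n : ℕ, {w ∈ S | w.length = n + 1}.ncard = {w ∈ S | w.length = n}.ncard + k := by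
  have hnil : [] ∈ S := by
    obtain ⟨a, ha⟩ := Set.nonempty_of_ncard_ne_zero (by rw [hk]; exact k.succ_ne_zero)
    exact hfac [a] ha [] List.nil_infix
  have hp0 : (level S 0).ncard = 1 := by rw [level_zero S hnil, Set.ncard_singleton]
  have hp1 : (level S 1).ncard = k + 1 := by
    rw [level_one, Set.ncard_image_of_injective _ List.singleton_injective, hk]
  have hsecond (n : ℕ) :
      ((level S (n + 2)).ncard : ℤ) - 2 * (level S (n + 1)).ncard + (level S n).ncard = 0 := by
    rw [← finsum_multiplicity_level S hfac n]
    refine finsum_mem_eq_zero_of_forall_eq_zero fun w hw => ?_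
    rw [multiplicity, hneutral w hw.1]
    ring
  intro n
  induction n with
  | zero => change (level S 1).ncard = (level S 0).ncard + k; omega
  | succ n ih =>
    change (level S (n + 1)).ncard = (level S n).ncard + k at ih
    change (level S (n + 2)).ncard = (level S (n + 1)).ncard + k
    have := hsecond n
    omega

end Paper
end

section
/- Let S be a factorial set of words and set b_n = s_{n+1} − s_n where s_n = p_{n+1} − p_n and p_n = Card(S ∩ A^n). Then for all n ≥ 0: b_n = Σ_{w ∈ S ∩ A^n} m(w) and s_n = Σ_{w ∈ S ∩ A^n} (r(w) − 1), where m(w) = e(w) − ℓ(w) − r(w) + 1. -/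
namespace Paper

variable {A : Type*}

/-!
Deleting the last letter maps `S ∩ Aⁿ⁺¹` into `S ∩ Aⁿ` (by factoriality), and the fibre over `w`
is `{w a | a ∈ R(w)}`; so `p (n+1) = Σ r(w)`. Deleting the first letter gives `p (n+1) = Σ ℓ(w)`,
and deleting both end letters gives `p (n+2) = Σ e(w)`. Both identities follow by subtracting
`p n = Σ 1`.
-/

theorem ncard_eq_finsum_ncard_fiber {α β : Type*} {T : Set α} {B : Set β} (hT : T.Finite)
    (hB : B.Finite) {π : α → β} (hπ : Set.MapsTo π T B) :
    T.ncard = ∑ᶠ b ∈ B, {x ∈ T | π x = b}.ncard := by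
  have hT_eq : T = ⋃ b ∈ B, {x ∈ T | π x = b} := by
    ext x
    simp only [Set.mem_iUnion, Set.mem_ofPred_eq, exists_prop]
    exact ⟨fun hx => ⟨π x, hπ hx, hx, rfl⟩, fun ⟨_, _, hx, _⟩ => hx⟩
  have hdisj : B.PairwiseDisjoint fun b => {x ∈ T | π x = b} := fun b _ c _ hbc =>
    Set.disjoint_left.2 fun _ hb hc => hbc (hb.2.symm.trans hc.2)
  conv_lhs => rw [hT_eq]
  exact hB.ncard_biUnion (fun _ _ => hT.subset fun _ hx => hx.1) hdisj

section

variable {A : Type*} {S : Set (List A)}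

/-- `S ∩ Aⁿ`. -/
def layer (S : Set (List A)) (n : ℕ) : Set (List A) := {w ∈ S | w.length = n}

theorem layer_finite [Finite A] (S : Set (List A)) (n : ℕ) : (layer S n).Finite :=
  (List.finite_length_eq A n).subset fun _ hw => hw.2

theorem Factorial.tail_mem (hS : Factorial S) {w : List A} (hw : w ∈ S) : w.tail ∈ S :=
  hS w hw _ (List.tail_suffix w).isInfix

theorem Factorial.dropLast_mem (hS : Factorial S) {w : List A} (hw : w ∈ S) : w.dropLast ∈ S :=
  hS w hw _ (List.dropLast_prefix w).isInfix

theorem fiber_dropLast_layer {n : ℕ} {w : List A} (hw : w.length = n) :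
    {v ∈ layer S (n + 1) | v.dropLast = w} = (w ++ [·]) '' Rext S w := by
  ext v
  rcases v.eq_nil_or_concat' with rfl | ⟨u, a, rfl⟩
  · simp [layer]
  · simp only [layer, Rext, Set.mem_ofPred_eq, Set.mem_image]
    grind

theorem fiber_tail_layer {n : ℕ} {w : List A} (hw : w.length = n) :
    {v ∈ layer S (n + 1) | v.tail = w} = (· :: w) '' Lext S w := by
  ext v
  rcases v with _ | ⟨a, u⟩
  · simp [layer]
  · simp only [layer, Lext, Set.mem_ofPred_eq, Set.mem_image]
    grind

theorem fiber_tail_dropLast_layer {n : ℕ} {w : List A} (hw : w.length = n) :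
    {v ∈ layer S (n + 2) | v.tail.dropLast = w}
      = (fun p : A × A => p.1 :: (w ++ [p.2])) '' Eext S w := by
  ext v
  rcases v with _ | ⟨a, u⟩
  · simp [layer]
  rcases u.eq_nil_or_concat' with rfl | ⟨u, b, rfl⟩
  · simp [layer]
  · simp only [layer, Eext, Set.mem_ofPred_eq, Set.mem_image, Prod.exists]
    grind

variable [Finite A]

theorem ncard_layer_succ_eq_finsum_ncard_Rext (hS : Factorial S) (n : ℕ) :
    (layer S (n + 1)).ncard = ∑ᶠ w ∈ layer S n, (Rext S w).ncard := by
  rw [ncard_eq_finsum_ncard_fiber (layer_finite S _) (layer_finite S n) (π := List.dropLast)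
    fun v hv => ⟨hS.dropLast_mem hv.1, by simp [hv.2]⟩]
  refine finsum_mem_congr rfl fun w hw => ?_
  rw [fiber_dropLast_layer hw.2, Set.ncard_image_of_injective _ fun a b h => by simpa using h]

theorem ncard_layer_succ_eq_finsum_ncard_Lext (hS : Factorial S) (n : ℕ) :
    (layer S (n + 1)).ncard = ∑ᶠ w ∈ layer S n, (Lext S w).ncard := by
  rw [ncard_eq_finsum_ncard_fiber (layer_finite S _) (layer_finite S n) (π := List.tail)
    fun v hv => ⟨hS.tail_mem hv.1, by simp [hv.2]⟩]
  refine finsum_mem_congr rfl fun w hw => ?_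
  rw [fiber_tail_layer hw.2, Set.ncard_image_of_injective _ fun a b h => by simpa using h]

theorem ncard_layer_add_two_eq_finsum_ncard_Eext (hS : Factorial S) (n : ℕ) :
    (layer S (n + 2)).ncard = ∑ᶠ w ∈ layer S n, (Eext S w).ncard := by
  rw [ncard_eq_finsum_ncard_fiber (layer_finite S _) (layer_finite S n)
    (π := fun v => v.tail.dropLast)
    fun v hv => ⟨hS.dropLast_mem (hS.tail_mem hv.1), by simp [hv.2]⟩]
  refine finsum_mem_congr rfl fun w hw => ?_
  rw [fiber_tail_dropLast_layer hw.2,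
    Set.ncard_image_of_injective _ fun p q h => by simpa [Prod.ext_iff] using h]

end

/-- For a factorial set `S`, with `p n = Card (S ∩ Aⁿ)`,
`s n = p (n+1) - p n` and `b n = s (n+1) - s n`, one has
`b n = Σ_{w ∈ S ∩ Aⁿ} m(w)` and `s n = Σ_{w ∈ S ∩ Aⁿ} (r(w) - 1)`. -/
theorem first_and_second_differences {A : Type*} [Fintype A] (S : Set (List A))
    (hfac : Factorial S) (n : ℕ) :
    (({w ∈ S | w.length = n + 2}.ncard : ℤ) - {w ∈ S | w.length = n + 1}.ncard)
        - (({w ∈ S | w.length = n + 1}.ncard : ℤ) - {w ∈ S | w.length = n}.ncard)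
      = ∑ᶠ w ∈ {w ∈ S | w.length = n},
          (((Eext S w).ncard : ℤ) - (Lext S w).ncard - (Rext S w).ncard + 1) ∧
    ({w ∈ S | w.length = n + 1}.ncard : ℤ) - {w ∈ S | w.length = n}.ncard
      = ∑ᶠ w ∈ {w ∈ S | w.length = n}, (((Rext S w).ncard : ℤ) - 1) := by
  have hfin : {w ∈ S | w.length = n}.Finite := layer_finite S n
  have hE := congrArg (Nat.cast (R := ℤ)) (ncard_layer_add_two_eq_finsum_ncard_Eext hfac n)
  have hL := congrArg (Nat.cast (R := ℤ)) (ncard_layer_succ_eq_finsum_ncard_Lext hfac n)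
  have hR := congrArg (Nat.cast (R := ℤ)) (ncard_layer_succ_eq_finsum_ncard_Rext hfac n)
  have hP := congrArg (Nat.cast (R := ℤ)) (finsum_one (s := {w ∈ S | w.length = n}))
  simp only [layer, Nat.cast_finsum_mem hfin, Nat.cast_one] at hE hL hR hP
  rw [finsum_mem_add_distrib hfin, finsum_mem_sub_distrib _ _ hfin,
    finsum_mem_sub_distrib _ _ hfin, finsum_mem_sub_distrib _ _ hfin]
  exact ⟨by linear_combination hE - hL - hR - hP, by linear_combination hR + hP⟩

end Paper
end

section
/- Every Sturmian set is a tree set: for each word w in the set, the extension graph G(w) is a tree (connected and acyclic). -/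
/-!
A factor `aw` that is not right special has exactly one right extension. If `w` is not right
special, every `aw` therefore extends only by the unique right extension of `w`.
If `w` is right special, the unique right special factor of length `|w| + 1` is `a₀w` for some
letter `a₀`, and `a₀w` extends by every letter. Either way `G(w)` is a star centred at a left
vertex `a₀`, adjacent to all of `R(w)`, with every other left vertex attached as a leaf, and
such a graph is a tree.
-/

namespace Paper

variable {A : Type*}

/-- The set of factors of the infinite word `x`. -/
def factorsOf (x : ℕ → A) : Set (List A) :=
  {w | ∃ i : ℕ, w = (List.range w.length).map fun j => x (i + j)}

def IsRightSpecial (S : Set (List A)) (w : List A) : Prop := 2 ≤ (Rext S w).ncard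

/-- `x` is a strict episturmian word: its set of factors is closed under reversal,
has exactly one right-special factor of each length, and every right-special factor `u`
satisfies `r u = Card A`. -/
def IsStrictEpisturmian [Fintype A] (x : ℕ → A) : Prop :=
  (∀ w ∈ factorsOf x, w.reverse ∈ factorsOf x) ∧
  (∀ n : ℕ, ∃! w : List A,
      w ∈ factorsOf x ∧ w.length = n ∧ IsRightSpecial (factorsOf x) w) ∧
  (∀ w ∈ factorsOf x, IsRightSpecial (factorsOf x) w →
      (Rext (factorsOf x) w).ncard = Fintype.card A)

end Paper

namespace SimpleGraph

variable {V : Type*} {G : SimpleGraph V}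

lemma Walk.IsCycle.exists_adj_ne_of_mem_support {u v : V} {p : G.Walk u u} (hp : p.IsCycle)
    (hv : v ∈ p.support) :
    ∃ w₁ ∈ p.support, ∃ w₂ ∈ p.support, w₁ ≠ w₂ ∧ G.Adj v w₁ ∧ G.Adj v w₂ := by
  obtain ⟨w₁, w₂, hne, hset⟩ := Set.ncard_eq_two.mp (hp.ncard_neighborSet_toSubgraph_eq_two hv)
  have h₁ : p.toSubgraph.Adj v w₁ := by simp [← Subgraph.mem_neighborSet, hset]
  have h₂ : p.toSubgraph.Adj v w₂ := by simp [← Subgraph.mem_neighborSet, hset]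
  exact ⟨w₁, Walk.mem_support_of_adj_toSubgraph h₁.symm, w₂,
    Walk.mem_support_of_adj_toSubgraph h₂.symm, hne, h₁.adj_sub, h₂.adj_sub⟩

/-- A cycle would need a vertex other than `c` whose two neighbours on the cycle are not
leaves, hence both equal to `c`. -/
theorem isAcyclic_of_forall_adj_subsingleton (c : V)
    (h : ∀ u v, G.Adj u v → u ≠ c → v ≠ c →
      (G.neighborSet u).Subsingleton ∨ (G.neighborSet v).Subsingleton) :
    G.IsAcyclic := by
  intro u p hp
  have not_leaf : ∀ z ∈ p.support, ¬ (G.neighborSet z).Subsingleton := by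
    intro z hz hsub
    obtain ⟨w₁, -, w₂, -, hne, h₁, h₂⟩ := hp.exists_adj_ne_of_mem_support hz
    exact hne (hsub h₁ h₂)
  have eq_c : ∀ z ∈ p.support, z = c := by
    intro z hz
    by_contra hzc
    obtain ⟨w₁, hw₁, w₂, hw₂, hne, h₁, h₂⟩ := hp.exists_adj_ne_of_mem_support hz
    have to_c : ∀ w ∈ p.support, G.Adj z w → w = c := fun w hw hzw => by
      by_contra hwc
      exact (h z w hzw hzc hwc).elim (not_leaf z hz) (not_leaf w hw)
    exact hne ((to_c w₁ hw₁ h₁).trans (to_c w₂ hw₂ h₂).symm)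
  obtain ⟨w₁, hw₁, w₂, hw₂, hne, -⟩ := hp.exists_adj_ne_of_mem_support p.start_mem_support
  exact hne ((eq_c w₁ hw₁).trans (eq_c w₂ hw₂).symm)

end SimpleGraph

namespace Paper

variable {A : Type*} {S : Set (List A)} {w : List A}

lemma mem_Eext_iff {a b : A} : (a, b) ∈ Eext S w ↔ b ∈ Rext S (a :: w) := Iff.rfl

lemma Factorial.Rext_cons_subset (hS : Factorial S) (a : A) (w : List A) :
    Rext S (a :: w) ⊆ Rext S w :=
  fun _ hb => hS _ hb _ ⟨[a], [], by simp⟩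

lemma Factorial.isRightSpecial_of_cons [Finite A] (hS : Factorial S) {a : A}
    (h : IsRightSpecial S (a :: w)) : IsRightSpecial S w :=
  h.trans (Set.ncard_le_ncard (hS.Rext_cons_subset a w) (Set.toFinite _))

lemma exists_Rext_eq_singleton [Finite A] (hne : (Rext S w).Nonempty)
    (h : ¬ IsRightSpecial S w) : ∃ b, Rext S w = {b} := by
  rw [← Set.ncard_eq_one]
  have := (Set.ncard_pos (Set.toFinite _)).mpr hne
  unfold IsRightSpecial at h
  omega

lemma Lext_nonempty_of_reverse_mem (hrev : ∀ u ∈ S, u.reverse ∈ S)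
    (h : (Rext S w.reverse).Nonempty) : (Lext S w).Nonempty := by
  obtain ⟨a, ha⟩ := h
  exact ⟨a, show a :: w ∈ S by simpa using hrev _ ha⟩

lemma mem_factorsOf_iff {x : ℕ → A} :
    w ∈ factorsOf x ↔ ∃ i, ∀ j (hj : j < w.length), w[j] = x (i + j) := by
  refine exists_congr fun i => ?_
  rw [List.ext_getElem_iff]
  simp

lemma factorial_factorsOf (x : ℕ → A) : Factorial (factorsOf x) := by
  rintro w hw u ⟨s, t, rfl⟩
  obtain ⟨i, hi⟩ := mem_factorsOf_iff.mp hw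
  refine mem_factorsOf_iff.mpr ⟨i + s.length, fun j hj => ?_⟩
  have := hi (s.length + j) (by simp only [List.length_append]; omega)
  simp only [List.append_assoc, List.getElem_append_right (Nat.le_add_right _ _)] at this
  simpa [List.getElem_append_left hj, add_assoc] using this

lemma Rext_factorsOf_nonempty {x : ℕ → A} (hw : w ∈ factorsOf x) :
    (Rext (factorsOf x) w).Nonempty := by
  obtain ⟨i, hi⟩ := mem_factorsOf_iff.mp hw
  refine ⟨x (i + w.length), mem_factorsOf_iff.mpr ⟨i, fun j hj => ?_⟩⟩
  rw [List.getElem_append]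
  split_ifs with hjw
  · exact hi j hjw
  · simp only [List.length_append, List.length_singleton] at hj
    simp [show j = w.length by omega]

/-- In graph terms: `G(w)` is the left vertex `a₀` joined to every right vertex, together with
the other left vertices, each a leaf. -/
def IsExtGraphHub (S : Set (List A)) (w : List A) (a₀ : A) : Prop :=
  a₀ ∈ Lext S w ∧ Rext S w ⊆ Rext S (a₀ :: w) ∧
    ∀ a ∈ Lext S w, a ≠ a₀ → ∃ b ∈ Rext S w, Rext S (a :: w) = {b}

lemma extGraph_adj_of_inl {u v : ExtVertex S w} {a : A} (huv : (extGraph S w).Adj u v)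
    (hu : u.1 = Sum.inl a) : ∃ b ∈ Rext S (a :: w), v.1 = Sum.inr b := by
  rcases huv with ⟨a', b, hu', hv, hab⟩ | ⟨_, _, hu', -, -⟩
  · obtain rfl : a = a' := Sum.inl_injective (hu.symm.trans hu')
    exact ⟨b, hab, hv⟩
  · exact absurd (hu.symm.trans hu') Sum.inl_ne_inr

lemma neighborSet_extGraph_subsingleton {a : A} (ha : a ∈ Lext S w)
    (hR : (Rext S (a :: w)).Subsingleton) :
    ((extGraph S w).neighborSet ⟨Sum.inl a, ha⟩).Subsingleton := by
  intro v₁ h₁ v₂ h₂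
  obtain ⟨b₁, hb₁, hv₁⟩ := extGraph_adj_of_inl h₁ rfl
  obtain ⟨b₂, hb₂, hv₂⟩ := extGraph_adj_of_inl h₂ rfl
  exact Subtype.ext (by rw [hv₁, hv₂, hR hb₁ hb₂])

theorem IsExtGraphHub.isTree_extGraph {a₀ : A} (h : IsExtGraphHub S w a₀) :
    (extGraph S w).IsTree := by
  obtain ⟨ha₀, hhub, hleaf⟩ := h
  let c : ExtVertex S w := ⟨Sum.inl a₀, ha₀⟩
  have adj_c : ∀ b (hb : b ∈ Rext S w), (extGraph S w).Adj c ⟨Sum.inr b, hb⟩ :=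
    fun b hb => Or.inl ⟨a₀, b, rfl, rfl, hhub hb⟩
  have leaf : ∀ a (ha : a ∈ Lext S w), a ≠ a₀ →
      ((extGraph S w).neighborSet ⟨Sum.inl a, ha⟩).Subsingleton := fun a ha hne => by
    obtain ⟨b, -, hb⟩ := hleaf a ha hne
    exact neighborSet_extGraph_subsingleton ha (hb ▸ Set.subsingleton_singleton)
  refine ⟨(extGraph S w).connected_iff_exists_forall_reachable.mpr ⟨c, ?_⟩,
    SimpleGraph.isAcyclic_of_forall_adj_subsingleton c ?_⟩
  · rintro ⟨a | b, hv⟩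
    · by_cases hne : a = a₀
      · subst hne
        rfl
      obtain ⟨b, hb, hab⟩ := hleaf a hv hne
      have hba : (extGraph S w).Adj ⟨Sum.inr b, hb⟩ ⟨Sum.inl a, hv⟩ :=
        Or.inr ⟨a, b, rfl, rfl, by rw [mem_Eext_iff, hab]; rfl⟩
      exact (adj_c b hb).reachable.trans hba.reachable
    · exact (adj_c b hv).reachable
  · rintro ⟨a | b, hu⟩ ⟨a' | b', hv⟩ huv hu_ne hv_ne
    · simp [extGraph] at huv
    · exact .inl (leaf a hu fun h => hu_ne (by subst h; rfl))
    · exact .inr (leaf a' hv fun h => hv_ne (by subst h; rfl))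
    · simp [extGraph] at huv

lemma isExtGraphHub_of_Rext_eq_singleton (hS : Factorial S)
    (hext : ∀ u ∈ S, (Rext S u).Nonempty) {a₀ b : A} (ha₀ : a₀ ∈ Lext S w)
    (hb : Rext S w = {b}) : IsExtGraphHub S w a₀ := by
  have hcons : ∀ a ∈ Lext S w, Rext S (a :: w) = {b} := fun a ha =>
    (hext _ ha).subset_singleton_iff.mp (hb ▸ hS.Rext_cons_subset a w)
  refine ⟨ha₀, by rw [hb, hcons a₀ ha₀], fun a ha _ => ⟨b, by rw [hb]; rfl, hcons a ha⟩⟩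

section Episturmian

variable [Fintype A] {x : ℕ → A}

lemma IsStrictEpisturmian.eq_of_isRightSpecial (hx : IsStrictEpisturmian x) {u v : List A}
    (hu : u ∈ factorsOf x) (hus : IsRightSpecial (factorsOf x) u) (hv : v ∈ factorsOf x)
    (hvs : IsRightSpecial (factorsOf x) v) (hlen : u.length = v.length) : u = v :=
  (hx.2.1 u.length).unique ⟨hu, rfl, hus⟩ ⟨hv, hlen.symm, hvs⟩

lemma IsStrictEpisturmian.Rext_eq_univ (hx : IsStrictEpisturmian x) (hw : w ∈ factorsOf x)
    (hs : IsRightSpecial (factorsOf x) w) : Rext (factorsOf x) w = Set.univ :=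
  Set.eq_of_subset_of_ncard_le (Set.subset_univ _)
    (by rw [Set.ncard_univ, Nat.card_eq_fintype_card, hx.2.2 w hw hs]) (Set.toFinite _)

/-- The hub is the letter `a₀` for which `a₀ w` is the right special factor of length
`|w| + 1`; it exists because that factor ends with a right special factor of length `|w|`,
which can only be `w`. -/
lemma IsStrictEpisturmian.exists_isExtGraphHub_of_isRightSpecial
    (hx : IsStrictEpisturmian x) (hw : w ∈ factorsOf x) (hs : IsRightSpecial (factorsOf x) w) :
    ∃ a₀, IsExtGraphHub (factorsOf x) w a₀ := by
  have hS := factorial_factorsOf x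
  obtain ⟨u, ⟨hu, hlen, hus⟩, -⟩ := hx.2.1 (w.length + 1)
  obtain ⟨a₀, w', rfl⟩ := List.exists_cons_of_length_eq_add_one hlen
  obtain rfl : w' = w := hx.eq_of_isRightSpecial (hS _ hu _ ⟨[a₀], [], by simp⟩)
    (hS.isRightSpecial_of_cons hus) hw hs (by simpa using hlen)
  refine ⟨a₀, hu, by rw [hx.Rext_eq_univ hu hus]; exact Set.subset_univ _, fun a ha hne => ?_⟩
  have hns : ¬ IsRightSpecial (factorsOf x) (a :: w') := fun has =>
    hne (List.cons.inj (hx.eq_of_isRightSpecial ha has hu hus rfl)).1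
  obtain ⟨b, hb⟩ := exists_Rext_eq_singleton (Rext_factorsOf_nonempty ha) hns
  exact ⟨b, hS.Rext_cons_subset a w' (hb ▸ rfl), hb⟩

lemma IsStrictEpisturmian.exists_isExtGraphHub (hx : IsStrictEpisturmian x)
    (hw : w ∈ factorsOf x) : ∃ a₀, IsExtGraphHub (factorsOf x) w a₀ := by
  by_cases hs : IsRightSpecial (factorsOf x) w
  · exact hx.exists_isExtGraphHub_of_isRightSpecial hw hs
  obtain ⟨b, hb⟩ := exists_Rext_eq_singleton (Rext_factorsOf_nonempty hw) hs
  obtain ⟨a₀, ha₀⟩ := Lext_nonempty_of_reverse_mem hx.1 (Rext_factorsOf_nonempty (hx.1 w hw))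
  exact ⟨a₀, isExtGraphHub_of_Rext_eq_singleton (factorial_factorsOf x)
    (fun _ => Rext_factorsOf_nonempty) ha₀ hb⟩

end Episturmian

/-- Every Sturmian set is a tree set: the extension graph of every
factor of a strict episturmian word is a tree. -/
theorem sturmian_is_tree_set {A : Type*} [Fintype A] (x : ℕ → A)
    (hx : IsStrictEpisturmian x) :
    ∀ w ∈ factorsOf x, (extGraph (factorsOf x) w).IsTree := by
  intro w hw
  obtain ⟨a₀, h⟩ := hx.exists_isExtGraphHub hw
  exact h.isTree_extGraph

end Paper
end

section
/- Let S be a recurrent set of words over alphabet A with A ⊆ S, set k = Card(A) − 1, and let X ⊆ S be a finite S-maximal bifix code of S-degree d. If S is strong then Card(X) − 1 ≥ dk; if S is weak then Card(X) − 1 ≤ dk; if S is neutral then Card(X) − 1 = dk. -/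
namespace Paper

variable {A : Type*}

/-!
Let `P` be the set of proper prefixes of `X`, `L` the maximal length of a word of `X` and `δ` the
parse count. For a bifix code, `δ(w)` is the number of suffixes of `w` having no prefix in `X`,
so `δ` can only grow when `w` is extended on either side. Since `δ ≤ d` on the recurrent set
`S`, every nonempty word of `S` is comparable with a word of `X` for the prefix order; hence the
suffixes of `w ∈ S` without prefix in `X` are exactly its suffixes in `P`, and `δ(w) = d` once
`|w| ≥ L`.

The set `P ∪ X` is a tree with root `[]` and leaves `X`, the children of `p` being the words
`pa`, `a ∈ R(p)`; hence `∑_{p ∈ P} (r(p) - 1) = Card X - 1`.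
On the other hand `∑_{a ∈ L(w)} (r(aw) - 1) = r(w) - 1 + m(w)`, so the sum of `r - 1` over the
words of length `L` of `S` ending with `p` telescopes down to `r(p) - 1` plus the multiplicities
of the shorter words ending with `p`. Summing over `p ∈ P` (or taking `p = []`) and counting each
word `w` with weight `δ(w)` gives `Card X - 1 = d k + ∑_{|w| < L} m(w) (d - δ(w))`.
-/

open scoped Classical

section Parses

variable {X : Set (List A)}

def NoPrefixIn (X : Set (List A)) (u : List A) : Prop := ∀ t, t <+: u → t ∉ X

lemma IsSuffixCode.eq_of_suffix (hX : IsSuffixCode X) {x y z : List A} (hx : x ∈ X)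
    (hy : y ∈ X) (hxz : x <:+ z) (hyz : y <:+ z) : x = y :=
  (List.suffix_or_suffix_of_suffix hxz hyz).elim (hX.2 x hx y hy) fun h =>
    (hX.2 y hy x hx h).symm

lemma append_mem_starOf {m x : List A} (hm : m ∈ starOf X) (hx : x ∈ X) :
    m ++ x ∈ starOf X := by
  obtain ⟨ls, hls, rfl⟩ := hm
  exact ⟨ls ++ [x], by simpa [or_imp, forall_and] using ⟨hls, hx⟩, by simp⟩

lemma eq_nil_or_eq_append_of_mem_starOf {m : List A} (hm : m ∈ starOf X) :
    m = [] ∨ ∃ m₀ ∈ starOf X, ∃ x ∈ X, m = m₀ ++ x := by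
  obtain ⟨ls, hls, rfl⟩ := hm
  rcases List.eq_nil_or_concat ls with rfl | ⟨ls₀, x, rfl⟩
  · exact Or.inl rfl
  · exact Or.inr ⟨ls₀.flatten, ⟨ls₀, fun u hu => hls u (by simp [hu]), rfl⟩, x,
      hls x (by simp), by simp⟩

theorem exists_eq_append_mem_starOf (hX : ∀ x ∈ X, x ≠ []) (z : List A) :
    ∃ v m, (∀ s, s <:+ v → s ∉ X) ∧ m ∈ starOf X ∧ z = v ++ m := by
  by_cases h : ∃ x ∈ X, x <:+ z
  · obtain ⟨x, hx, y, rfl⟩ := h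
    have : y.length < (y ++ x).length := by simp [List.length_pos_iff.2 (hX x hx)]
    obtain ⟨v, m, hv, hm, rfl⟩ := exists_eq_append_mem_starOf hX y
    exact ⟨v, m ++ x, hv, append_mem_starOf hm hx, by simp⟩
  · push Not at h
    exact ⟨z, [], fun s hs hsX => h s hsX hs, ⟨[], by simp, rfl⟩, by simp⟩
termination_by z.length

theorem eq_of_append_eq_append_of_mem_starOf (hX : IsSuffixCode X) {v v' m m' : List A}
    (hv : ∀ s, s <:+ v → s ∉ X) (hv' : ∀ s, s <:+ v' → s ∉ X)
    (hm : m ∈ starOf X) (hm' : m' ∈ starOf X) (h : v ++ m = v' ++ m') : v = v' := by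
  rcases eq_nil_or_eq_append_of_mem_starOf hm with rfl | ⟨m₀, hm₀, x, hx, rfl⟩ <;>
    rcases eq_nil_or_eq_append_of_mem_starOf hm' with rfl | ⟨m₀', hm₀', x', hx', rfl⟩
  · simpa using h
  · exact absurd hx' (hv x' ⟨v' ++ m₀', by simpa using h.symm⟩)
  · exact absurd hx (hv' x ⟨v ++ m₀, by simpa using h⟩)
  · obtain rfl : x = x' := hX.eq_of_suffix hx hx' ⟨v ++ m₀, rfl⟩
      ⟨v' ++ m₀', by simpa using h.symm⟩
    have : m₀.length < (m₀ ++ x).length := by simp [List.length_pos_iff.2 (hX.1 x hx)]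
    exact eq_of_append_eq_append_of_mem_starOf hX hv hv' hm₀ hm₀'
      (List.append_cancel_right (by simpa using h))
termination_by m.length

noncomputable def noPrefixSuffixes (X : Set (List A)) (w : List A) : Finset (List A) :=
  w.tails.toFinset.filter (NoPrefixIn X)

lemma mem_noPrefixSuffixes {u w : List A} :
    u ∈ noPrefixSuffixes X w ↔ u <:+ w ∧ NoPrefixIn X u := by
  simp [noPrefixSuffixes]

theorem parseCount_eq_card_noPrefixSuffixes (hX : IsSuffixCode X) (w : List A) :
    parseCount X w = (noPrefixSuffixes X w).card := by
  have hinj : Set.InjOn (fun p : List A × List A × List A => p.2.2) {p | IsParse X w p} := by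
    rintro ⟨v, m, u⟩ ⟨hw, hv, hm, -⟩ ⟨v', m', u'⟩ ⟨hw', hv', hm', -⟩ (rfl : u = u')
    have hvm : v ++ m = v' ++ m' := List.append_cancel_right (hw.symm.trans hw')
    obtain rfl := eq_of_append_eq_append_of_mem_starOf hX hv hv' hm hm' hvm
    simp [List.append_cancel_left hvm]
  have himage : (fun p : List A × List A × List A => p.2.2) '' {p | IsParse X w p} =
      noPrefixSuffixes X w := by
    ext u
    simp only [Set.mem_image, Set.mem_ofPred_eq, Finset.mem_coe, mem_noPrefixSuffixes]
    constructor
    · rintro ⟨⟨v, m, u⟩, ⟨hw, -, -, hu⟩, rfl⟩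
      exact ⟨⟨v ++ m, hw.symm⟩, hu⟩
    · rintro ⟨⟨z, rfl⟩, hu⟩
      obtain ⟨v, m, hv, hm, rfl⟩ := exists_eq_append_mem_starOf hX.1 z
      exact ⟨⟨v, m, u⟩, ⟨rfl, hv, hm, hu⟩, rfl⟩
  rw [parseCount, ← hinj.ncard_image, himage, Set.ncard_coe_finset]

lemma noPrefixSuffixes_mono {w w' : List A} (h : w <:+ w') :
    noPrefixSuffixes X w ⊆ noPrefixSuffixes X w' := fun u hu => by
  rw [mem_noPrefixSuffixes] at hu ⊢
  exact ⟨hu.1.trans h, hu.2⟩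

lemma noPrefixSuffixes_ssubset {u w : List A} (hu : u ≠ []) (h : NoPrefixIn X (u ++ w)) :
    noPrefixSuffixes X w ⊂ noPrefixSuffixes X (u ++ w) := by
  refine (Finset.ssubset_iff_of_subset (noPrefixSuffixes_mono ⟨u, rfl⟩)).2
    ⟨u ++ w, mem_noPrefixSuffixes.2 ⟨List.suffix_refl _, h⟩, fun hmem => ?_⟩
  have := (mem_noPrefixSuffixes.1 hmem).1.length_le
  simp only [List.length_append] at this
  exact hu (List.length_eq_zero_iff.1 (by omega))

lemma noPrefixSuffixes_append_eq {u w : List A}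
    (h : ∀ s, s <:+ u ++ w → w.length < s.length → ¬ NoPrefixIn X s) :
    noPrefixSuffixes X (u ++ w) = noPrefixSuffixes X w := by
  refine subset_antisymm (fun s hs => ?_) (noPrefixSuffixes_mono ⟨u, rfl⟩)
  rw [mem_noPrefixSuffixes] at hs ⊢
  refine ⟨List.suffix_of_suffix_length_le hs.1 ⟨u, rfl⟩ ?_, hs.2⟩
  by_contra hlt
  exact h s hs.1 (not_le.1 hlt) hs.2

lemma IsPrefixCode.reverse (hX : IsPrefixCode X) : IsSuffixCode (List.reverse ⁻¹' X) :=
  ⟨fun x hx => by simpa using hX.1 _ hx,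
    fun x hx y hy hxy => List.reverse_injective (hX.2 _ hx _ hy (List.reverse_prefix.2 hxy))⟩

lemma reverse_mem_starOf {m : List A} (hm : m ∈ starOf X) :
    m.reverse ∈ starOf (List.reverse ⁻¹' X) := by
  obtain ⟨ls, hls, rfl⟩ := hm
  refine ⟨(ls.map List.reverse).reverse, ?_, List.reverse_flatten⟩
  simp only [List.mem_reverse, List.mem_map]
  rintro _ ⟨u, hu, rfl⟩
  simpa using hls u hu

lemma IsParse.reverse {w : List A} {p : List A × List A × List A} (hp : IsParse X w p) :
    IsParse (List.reverse ⁻¹' X) w.reverse (p.2.2.reverse, p.2.1.reverse, p.1.reverse) := by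
  obtain ⟨hw, hv, hm, hu⟩ := hp
  refine ⟨by simp [hw], fun s hs hsX => hu _ ?_ hsX, reverse_mem_starOf hm,
    fun t ht htX => hv _ ?_ htX⟩
  · simpa using List.reverse_prefix.2 hs
  · simpa using List.reverse_suffix.2 ht

lemma reverse_preimage_reverse_preimage : List.reverse ⁻¹' (List.reverse ⁻¹' X) = X := by
  ext; simp

theorem parseCount_reverse (w : List A) :
    parseCount (List.reverse ⁻¹' X) w.reverse = parseCount X w := by
  let τ : List A × List A × List A → List A × List A × List A :=
    fun p => (p.2.2.reverse, p.2.1.reverse, p.1.reverse)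
  have hτ : Function.Involutive τ := fun p => by simp [τ]
  have himage : τ '' {p | IsParse X w p} = {p | IsParse (List.reverse ⁻¹' X) w.reverse p} := by
    refine subset_antisymm (Set.image_subset_iff.2 fun p hp => hp.reverse)
      fun p hp => ⟨τ p, ?_, hτ p⟩
    simpa [τ, reverse_preimage_reverse_preimage] using (show IsParse _ _ p from hp).reverse
  rw [parseCount, parseCount, ← himage, Set.ncard_image_of_injective _ hτ.injective]

lemma parseCount_le_append_right (hX : IsPrefixCode X) (w u : List A) :
    parseCount X w ≤ parseCount X (w ++ u) := by
  rw [← parseCount_reverse w, ← parseCount_reverse (w ++ u), List.reverse_append,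
    parseCount_eq_card_noPrefixSuffixes hX.reverse,
    parseCount_eq_card_noPrefixSuffixes hX.reverse]
  exact Finset.card_le_card (noPrefixSuffixes_mono ⟨_, rfl⟩)

end Parses

section Degree

variable {S X : Set (List A)} {d L : ℕ}

/-- A word `y ≠ []` of `S` incomparable with all of `X` would give, by recurrence, words
`y v₁ y v₂ ⋯ y vₙ` of `S` whose `n` suffixes beginning with `y` have no prefix in `X`, hence
more than `d` parses. -/
theorem exists_mem_prefix_or_prefix (hrec : Recurrent S) (hX : IsSuffixCode X)
    (hd : ∀ w ∈ S, parseCount X w ≤ d) {y : List A} (hy : y ∈ S) (hy0 : y ≠ []) :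
    ∃ x ∈ X, x <+: y ∨ y <+: x := by
  by_contra! hinc
  have hfree : ∀ z, y <+: z → NoPrefixIn X z := fun z hyz t htz htX =>
    (List.prefix_or_prefix_of_prefix htz hyz).elim (hinc t htX).1 (hinc t htX).2
  have hgrow : ∀ n : ℕ, ∃ z ∈ S, n ≤ parseCount X z := by
    intro n
    induction n with
    | zero => exact ⟨y, hy, Nat.zero_le _⟩
    | succ n ih =>
      obtain ⟨z, hz, hn⟩ := ih
      obtain ⟨v, hv⟩ := hrec.2.2.2 y hy z hz
      refine ⟨y ++ v ++ z, hv, ?_⟩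
      have hlt := Finset.card_lt_card (noPrefixSuffixes_ssubset (X := X) (u := y ++ v) (w := z)
        (by simp [hy0]) (hfree _ (by simp)))
      rw [← parseCount_eq_card_noPrefixSuffixes hX, ← parseCount_eq_card_noPrefixSuffixes hX]
        at hlt
      omega
  obtain ⟨z, hz, hdz⟩ := hgrow (d + 1)
  exact absurd (hd z hz) (by omega)

lemma not_noPrefixIn_of_length_lt (hrec : Recurrent S) (hX : IsSuffixCode X)
    (hd : ∀ w ∈ S, parseCount X w ≤ d) (hL : ∀ x ∈ X, x.length ≤ L) {w : List A}
    (hw : w ∈ S) (hlen : L < w.length) : ¬ NoPrefixIn X w := by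
  obtain ⟨x, hx, hxw | hwx⟩ :=
    exists_mem_prefix_or_prefix hrec hX hd hw (List.ne_nil_of_length_pos (by omega))
  · exact fun h => h x hxw hx
  · exact absurd (hwx.length_le.trans (hL x hx)) (by omega)

lemma parseCount_append_left_eq (hrec : Recurrent S) (hX : IsSuffixCode X)
    (hd : ∀ w ∈ S, parseCount X w ≤ d) (hL : ∀ x ∈ X, x.length ≤ L) {u w : List A}
    (huw : u ++ w ∈ S) (hlen : L ≤ w.length) : parseCount X (u ++ w) = parseCount X w := by
  rw [parseCount_eq_card_noPrefixSuffixes hX, parseCount_eq_card_noPrefixSuffixes hX,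
    noPrefixSuffixes_append_eq fun s hs hws =>
      not_noPrefixIn_of_length_lt hrec hX hd hL (hrec.1 _ huw s hs.isInfix) (by omega)]

theorem parseCount_eq_of_le_length (hrec : Recurrent S) (hX : IsBifixCode X)
    (hd : SDegreeIs S X d) (hL : ∀ x ∈ X, x.length ≤ L) {w : List A} (hw : w ∈ S)
    (hlen : L ≤ w.length) : parseCount X w = d := by
  obtain ⟨w₀, hw₀, hdw₀⟩ := hd.2
  obtain ⟨v, hv⟩ := hrec.2.2.2 w₀ hw₀ w hw
  have hright := parseCount_le_append_right hX.1 w₀ (v ++ w)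
  have hleft := parseCount_append_left_eq hrec hX.2 hd.1 hL (u := w₀ ++ v) hv hlen
  have hmax := hd.1 _ hv
  rw [← List.append_assoc] at hright
  omega

end Degree

lemma sum_sum_filter_eq_sum_card_mul {α β R : Type*} [CommSemiring R] (s : Finset α)
    (t : Finset β) (r : α → β → Prop) [∀ a b, Decidable (r a b)] (g : β → R) :
    ∑ a ∈ s, ∑ b ∈ t.filter (r a), g b =
      ∑ b ∈ t, ((s.filter (r · b)).card : R) * g b := by
  simp_rw [Finset.sum_filter]
  rw [Finset.sum_comm]
  simp [← Finset.sum_filter]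

section ProperPrefixes

variable {S : Set (List A)} {X : Finset (List A)} {d : ℕ}

noncomputable def properPrefixes (X : Finset (List A)) : Finset (List A) :=
  X.biUnion fun x => x.inits.toFinset.erase x

lemma mem_properPrefixes {p : List A} :
    p ∈ properPrefixes X ↔ ∃ x ∈ X, p <+: x ∧ p ≠ x := by
  simp [properPrefixes, and_comm]

lemma noPrefixIn_of_mem_properPrefixes (hX : IsPrefixCode (X : Set (List A))) {p : List A}
    (hp : p ∈ properPrefixes X) : NoPrefixIn X p := by
  obtain ⟨x, hx, hpx, hne⟩ := mem_properPrefixes.1 hp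
  intro t htp htX
  obtain rfl := hX.2 t htX x hx (htp.trans hpx)
  exact hne (hpx.eq_of_length_le htp.length_le)

lemma mem_of_mem_properPrefixes (hfac : Factorial S) (hXS : (X : Set (List A)) ⊆ S)
    {p : List A} (hp : p ∈ properPrefixes X) : p ∈ S := by
  obtain ⟨x, hx, hpx, -⟩ := mem_properPrefixes.1 hp
  exact hfac x (hXS hx) p hpx.isInfix

lemma nil_mem_properPrefixes (hX : ∀ x ∈ X, x ≠ []) (hXne : X.Nonempty) :
    [] ∈ properPrefixes X := by
  obtain ⟨x, hx⟩ := hXne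
  exact mem_properPrefixes.2 ⟨x, hx, List.nil_prefix, (hX x hx).symm⟩

lemma dropLast_mem_properPrefixes {w : List A} (hw : w ∈ properPrefixes X ∪ X)
    (hw0 : w ≠ []) : w.dropLast ∈ properPrefixes X := by
  obtain ⟨x, hx, hwx⟩ : ∃ x ∈ X, w <+: x := by
    rcases Finset.mem_union.1 hw with hw | hw
    · obtain ⟨x, hx, hwx, -⟩ := mem_properPrefixes.1 hw
      exact ⟨x, hx, hwx⟩
    · exact ⟨w, hw, List.prefix_refl w⟩
  refine mem_properPrefixes.2 ⟨x, hx, (List.dropLast_prefix w).trans hwx, fun h => ?_⟩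
  have hlen := hwx.length_le
  rw [← h, List.length_dropLast] at hlen
  have := List.length_pos_iff.2 hw0
  omega

theorem mem_properPrefixes_iff (hrec : Recurrent S) (hX : IsBifixCode (X : Set (List A)))
    (hd : ∀ w ∈ S, parseCount X w ≤ d) (hXne : X.Nonempty) {w : List A} (hw : w ∈ S) :
    w ∈ properPrefixes X ↔ NoPrefixIn X w := by
  refine ⟨noPrefixIn_of_mem_properPrefixes hX.1, fun hfree => mem_properPrefixes.2 ?_⟩
  rcases eq_or_ne w [] with rfl | hw0
  · exact mem_properPrefixes.1 (nil_mem_properPrefixes hX.1.1 hXne)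
  · obtain ⟨x, hx, hxw | hwx⟩ := exists_mem_prefix_or_prefix hrec hX.2 hd hw hw0
    · exact absurd hx (hfree x hxw)
    · exact ⟨x, hx, hwx, by rintro rfl; exact hfree w (List.prefix_refl w) hx⟩

lemma concat_mem_properPrefixes_union (hrec : Recurrent S) (hX : IsBifixCode (X : Set (List A)))
    (hd : ∀ w ∈ S, parseCount X w ≤ d) (hXne : X.Nonempty) {p : List A}
    (hp : p ∈ properPrefixes X) {a : A} (hpa : p ++ [a] ∈ S) :
    p ++ [a] ∈ properPrefixes X ∪ X := by
  rw [Finset.mem_union]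
  by_cases hfree : NoPrefixIn X (p ++ [a])
  · exact Or.inl ((mem_properPrefixes_iff hrec hX hd hXne hpa).2 hfree)
  · simp only [NoPrefixIn, not_forall, not_not] at hfree
    obtain ⟨t, ht, htX⟩ := hfree
    rcases List.prefix_concat_iff.1 ht with rfl | htp
    · exact Or.inr htX
    · exact absurd htX (noPrefixIn_of_mem_properPrefixes hX.1 hp t htp)

theorem parseCount_eq_card_properPrefixes_suffix (hrec : Recurrent S)
    (hX : IsBifixCode (X : Set (List A))) (hd : ∀ w ∈ S, parseCount X w ≤ d)
    (hXne : X.Nonempty) {w : List A} (hw : w ∈ S) :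
    parseCount X w = ((properPrefixes X).filter (· <:+ w)).card := by
  rw [parseCount_eq_card_noPrefixSuffixes hX.2]
  congr 1
  ext u
  rw [mem_noPrefixSuffixes, Finset.mem_filter, and_comm (a := u <:+ w)]
  exact and_congr_left fun huw =>
    (mem_properPrefixes_iff hrec hX hd hXne (hrec.1 w hw u huw.isInfix)).symm

theorem sum_ncard_Rext_properPrefixes [Fintype A] (hrec : Recurrent S)
    (hX : IsBifixCode (X : Set (List A))) (hXS : (X : Set (List A)) ⊆ S)
    (hd : ∀ w ∈ S, parseCount X w ≤ d) (hXne : X.Nonempty) :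
    ∑ p ∈ properPrefixes X, (Rext S p).ncard + 1 = (properPrefixes X).card + X.card := by
  have hchildren : ∑ p ∈ properPrefixes X, (Rext S p).ncard =
      ((properPrefixes X ∪ X).erase []).card := by
    simp_rw [Set.ncard_eq_toFinset_card']
    rw [← Finset.card_sigma]
    refine Finset.card_bij (fun q _ => q.1 ++ [q.2]) (fun q hq => ?_) ?_ fun w hw => ?_
    · rw [Finset.mem_sigma, Set.mem_toFinset] at hq
      exact Finset.mem_erase.2
        ⟨by simp, concat_mem_properPrefixes_union hrec hX hd hXne hq.1 hq.2⟩
    · rintro ⟨p, a⟩ - ⟨p', a'⟩ - h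
      obtain ⟨rfl, h'⟩ := List.append_inj' h rfl
      simp_all
    · obtain ⟨hw0, hw⟩ := Finset.mem_erase.1 hw
      refine ⟨⟨w.dropLast, w.getLast hw0⟩, Finset.mem_sigma.2
        ⟨dropLast_mem_properPrefixes hw hw0, Set.mem_toFinset.2 ?_⟩,
        List.dropLast_append_getLast hw0⟩
      change w.dropLast ++ [w.getLast hw0] ∈ S
      rw [List.dropLast_append_getLast hw0]
      rcases Finset.mem_union.1 hw with hw | hw
      · exact mem_of_mem_properPrefixes hrec.1 hXS hw
      · exact hXS hw
  rw [hchildren, Finset.card_erase_add_one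
    (Finset.mem_union_left X (nil_mem_properPrefixes hX.1.1 hXne)),
    Finset.card_union_of_disjoint]
  exact Finset.disjoint_left.2 fun p hp hpX =>
    noPrefixIn_of_mem_properPrefixes hX.1 hp p (List.prefix_refl p) hpX

lemma sum_properPrefixes_sum_suffix (hrec : Recurrent S) (hX : IsBifixCode (X : Set (List A)))
    (hd : ∀ w ∈ S, parseCount X w ≤ d) (hXne : X.Nonempty) {W : Finset (List A)}
    (hW : ∀ w ∈ W, w ∈ S) (g : List A → ℤ) :
    ∑ p ∈ properPrefixes X, ∑ w ∈ W.filter (p <:+ ·), g w =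
      ∑ w ∈ W, (parseCount X w : ℤ) * g w := by
  rw [sum_sum_filter_eq_sum_card_mul]
  refine Finset.sum_congr rfl fun w hw => ?_
  rw [parseCount_eq_card_properPrefixes_suffix hrec hX hd hXne (hW w hw)]

end ProperPrefixes

section Counting

variable [Fintype A] {S : Set (List A)}

noncomputable def wordsOfLength (S : Set (List A)) (n : ℕ) : Finset (List A) :=
  ((List.finite_length_eq A n).inter_of_left S).toFinset

lemma mem_wordsOfLength {n : ℕ} {w : List A} :
    w ∈ wordsOfLength S n ↔ w.length = n ∧ w ∈ S := by
  simp [wordsOfLength]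

noncomputable def bilateralMultiplicity (S : Set (List A)) (w : List A) : ℤ :=
  ((Eext S w).ncard : ℤ) - (Lext S w).ncard - (Rext S w).ncard + 1

def eextEquivSigmaRext (S : Set (List A)) (w : List A) :
    Eext S w ≃ Σ a : A, Rext S (a :: w) where
  toFun q := ⟨q.1.1, q.1.2, q.2⟩
  invFun q := ⟨(q.1, q.2.1), q.2.2⟩

lemma sum_ncard_Rext_cons (w : List A) : ∑ a, (Rext S (a :: w)).ncard = (Eext S w).ncard := by
  simp_rw [← Nat.card_coe_set_eq]
  rw [Nat.card_congr (eextEquivSigmaRext S w), Nat.card_sigma]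

lemma sum_Lext_ncard_Rext_cons_sub_one (hfac : Factorial S) (w : List A) :
    ∑ a ∈ (Lext S w).toFinset, (((Rext S (a :: w)).ncard : ℤ) - 1) =
      (Rext S w).ncard - 1 + bilateralMultiplicity S w := by
  have hout : ∀ a ∉ (Lext S w).toFinset, (Rext S (a :: w)).ncard = 0 := fun a ha => by
    have : Rext S (a :: w) = ∅ := Set.eq_empty_of_forall_notMem fun b hb =>
      ha (Set.mem_toFinset.2 (hfac _ hb _ ⟨[], [b], rfl⟩))
    rw [this, Set.ncard_empty]
  rw [Finset.sum_sub_distrib, Finset.sum_const, ← Set.ncard_eq_toFinset_card',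
    ← Nat.cast_sum, Finset.sum_subset (Finset.subset_univ _) fun a _ => hout a,
    sum_ncard_Rext_cons, bilateralMultiplicity, nsmul_one]
  ring

lemma sum_wordsOfLength_succ (hfac : Factorial S) {p : List A} {n : ℕ} (hn : p.length ≤ n)
    (g : List A → ℤ) :
    ∑ w ∈ (wordsOfLength S (n + 1)).filter (p <:+ ·), g w =
      ∑ w ∈ (wordsOfLength S n).filter (p <:+ ·),
        ∑ a ∈ (Lext S w).toFinset, g (a :: w) := by
  rw [Finset.sum_sigma']
  refine (Finset.sum_bij (fun q _ => q.2 :: q.1) ?_ ?_ ?_ fun _ _ => rfl).symm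
  · rintro ⟨w, a⟩ hq
    simp only [Finset.mem_sigma, Finset.mem_filter, mem_wordsOfLength, Set.mem_toFinset] at hq
    obtain ⟨⟨⟨hlen, -⟩, hpw⟩, ha⟩ := hq
    simp only [Finset.mem_filter, mem_wordsOfLength]
    exact ⟨⟨by simp [hlen], ha⟩, hpw.trans (List.suffix_cons a w)⟩
  · rintro ⟨w, a⟩ - ⟨w', a'⟩ - h
    simp only [List.cons.injEq] at h
    rw [h.1, h.2]
  · intro w hw
    simp only [Finset.mem_filter, mem_wordsOfLength] at hw
    obtain ⟨⟨hlen, hwS⟩, hpw⟩ := hw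
    obtain ⟨a, w, rfl⟩ := List.exists_cons_of_length_eq_add_one hlen
    refine ⟨⟨w, a⟩, ?_, rfl⟩
    simp only [Finset.mem_sigma, Finset.mem_filter, mem_wordsOfLength, Set.mem_toFinset]
    refine ⟨⟨⟨by simpa using hlen, hfac _ hwS w (List.suffix_cons a w).isInfix⟩, ?_⟩,
      hwS⟩
    rcases List.suffix_cons_iff.1 hpw with rfl | h
    · simp at hn hlen; omega
    · exact h

theorem sum_ncard_Rext_sub_one_eq (hfac : Factorial S) {p : List A} (hp : p ∈ S) {n : ℕ}
    (hn : p.length ≤ n) :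
    ∑ w ∈ (wordsOfLength S n).filter (p <:+ ·), (((Rext S w).ncard : ℤ) - 1) =
      (Rext S p).ncard - 1 + ∑ i ∈ Finset.range n,
        ∑ w ∈ (wordsOfLength S i).filter (p <:+ ·), bilateralMultiplicity S w := by
  induction n, hn using Nat.le_induction with
  | base =>
    have hsingle : (wordsOfLength S p.length).filter (p <:+ ·) = {p} := by
      ext w
      simp only [Finset.mem_filter, mem_wordsOfLength, Finset.mem_singleton]
      constructor
      · rintro ⟨⟨hlen, -⟩, hpw⟩
        exact (hpw.eq_of_length hlen.symm).symm
      · rintro rfl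
        exact ⟨⟨rfl, hp⟩, List.suffix_refl _⟩
    have hempty : ∀ i ∈ Finset.range p.length, (wordsOfLength S i).filter (p <:+ ·) = ∅ := by
      intro i hi
      refine Finset.filter_eq_empty_iff.2 fun w hw hpw => ?_
      have := hpw.length_le
      simp only [mem_wordsOfLength, Finset.mem_range] at hw hi
      omega
    rw [hsingle, Finset.sum_singleton, Finset.sum_congr rfl fun i hi => by rw [hempty i hi]]
    simp
  | succ n hn ih =>
    rw [sum_wordsOfLength_succ hfac hn, Finset.sum_range_succ,
      Finset.sum_congr rfl fun w _ => sum_Lext_ncard_Rext_cons_sub_one hfac w,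
      Finset.sum_add_distrib, ih]
    ring

variable {X : Finset (List A)} {d : ℕ}

theorem sum_parseCount_mul_ncard_Rext_sub_one (hrec : Recurrent S)
    (hX : IsBifixCode (X : Set (List A))) (hXS : (X : Set (List A)) ⊆ S)
    (hd : ∀ w ∈ S, parseCount X w ≤ d) (hXne : X.Nonempty) {n : ℕ}
    (hn : ∀ x ∈ X, x.length ≤ n) :
    ∑ w ∈ wordsOfLength S n, (parseCount X w : ℤ) * ((Rext S w).ncard - 1) =
      X.card - 1 + ∑ i ∈ Finset.range n,
        ∑ w ∈ wordsOfLength S i, (parseCount X w : ℤ) * bilateralMultiplicity S w := by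
  have hW : ∀ i, ∀ w ∈ wordsOfLength S i, w ∈ S := fun i w hw => (mem_wordsOfLength.1 hw).2
  have htree : ∑ p ∈ properPrefixes X, (((Rext S p).ncard : ℤ) - 1) = X.card - 1 := by
    have := sum_ncard_Rext_properPrefixes hrec hX hXS hd hXne
    rw [Finset.sum_sub_distrib, Finset.sum_const, nsmul_one, ← Nat.cast_sum]
    omega
  have hlen : ∀ p ∈ properPrefixes X, p.length ≤ n := fun p hp => by
    obtain ⟨x, hx, hpx, -⟩ := mem_properPrefixes.1 hp
    exact hpx.length_le.trans (hn x hx)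
  rw [← sum_properPrefixes_sum_suffix hrec hX hd hXne (hW n),
    Finset.sum_congr rfl fun p hp => sum_ncard_Rext_sub_one_eq hrec.1
      (mem_of_mem_properPrefixes hrec.1 hXS hp) (hlen p hp),
    Finset.sum_add_distrib, htree, Finset.sum_comm]
  simp_rw [sum_properPrefixes_sum_suffix hrec hX hd hXne (hW _)]

end Counting

theorem card_sub_one_eq_degree_mul_add [Fintype A] {S : Set (List A)} {X : Finset (List A)}
    {d k : ℕ} (hrec : Recurrent S) (halph : ∀ a : A, [a] ∈ S) (hk : Fintype.card A = k + 1)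
    (hX : IsBifixCode (X : Set (List A))) (hXS : (X : Set (List A)) ⊆ S)
    (hd : SDegreeIs S X d) :
    (X.card : ℤ) - 1 = d * k + ∑ i ∈ Finset.range (X.sup List.length),
      ∑ w ∈ wordsOfLength S i, bilateralMultiplicity S w * (d - parseCount X w) := by
  set L := X.sup List.length
  have hL : ∀ x ∈ X, x.length ≤ L := fun x hx => Finset.le_sup hx
  obtain ⟨a⟩ : Nonempty A := Fintype.card_pos_iff.1 (by omega)
  obtain ⟨x, hx, -⟩ :=
    exists_mem_prefix_or_prefix hrec hX.2 hd.1 (halph a) (List.cons_ne_nil a [])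
  have hnil : (Rext S []).ncard = k + 1 := by
    rw [← hk, ← Nat.card_eq_fintype_card, ← Set.ncard_univ]
    exact congrArg Set.ncard (Set.eq_univ_of_forall halph)
  have hroot := sum_ncard_Rext_sub_one_eq hrec.1 (hrec.1 _ (halph a) [] List.nil_infix)
    (Nat.zero_le L)
  simp only [List.nil_suffix, Finset.filter_true, hnil] at hroot
  have hsum := sum_parseCount_mul_ncard_Rext_sub_one hrec hX hXS hd.1 ⟨x, hx⟩ hL
  rw [Finset.sum_congr rfl fun w hw => by
      rw [parseCount_eq_of_le_length hrec hX hd hL (mem_wordsOfLength.1 hw).2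
        (mem_wordsOfLength.1 hw).1.ge],
    ← Finset.mul_sum, hroot] at hsum
  have hexpand : ∀ w, bilateralMultiplicity S w * (d - parseCount X w) =
      d * bilateralMultiplicity S w - parseCount X w * bilateralMultiplicity S w := fun w => by
    ring
  simp only [hexpand, Finset.sum_sub_distrib, ← Finset.mul_sum]
  push_cast at hsum
  linarith

/-- **Cardinality Theorem.** Let `S` be a recurrent set containing the
alphabet `A` with `Card A = k + 1`, and let `X ⊆ S` be a finite `S`-maximal bifix code of
`S`-degree `d`. If `S` is strong then `Card X - 1 ≥ d k`; if `S` is weak then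
`Card X - 1 ≤ d k`; if `S` is neutral then `Card X - 1 = d k`. -/
theorem cardinality_theorem {A : Type*} [Fintype A] (S : Set (List A))
    (hrec : Recurrent S) (halph : ∀ a : A, [a] ∈ S)
    (k : ℕ) (hk : Fintype.card A = k + 1)
    (X : Finset (List A)) (hmax : IsSMaximalBifixCode S ↑X)
    (d : ℕ) (hd : SDegreeIs S (↑X : Set (List A)) d) :
    ((∀ w ∈ S, (0 : ℤ) ≤ ((Eext S w).ncard : ℤ) - (Lext S w).ncard - (Rext S w).ncard + 1) →
      (d * k : ℤ) ≤ (X.card : ℤ) - 1) ∧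
    ((∀ w ∈ S, ((Eext S w).ncard : ℤ) - (Lext S w).ncard - (Rext S w).ncard + 1 ≤ 0) →
      (X.card : ℤ) - 1 ≤ (d * k : ℤ)) ∧
    ((∀ w ∈ S, ((Eext S w).ncard : ℤ) - (Lext S w).ncard - (Rext S w).ncard + 1 = 0) →
      (X.card : ℤ) - 1 = (d * k : ℤ)) := by
  have hcard := card_sub_one_eq_degree_mul_add hrec halph hk hmax.1 hmax.2.1 hd
  have hweight :
      ∀ i, ∀ w ∈ wordsOfLength S i, w ∈ S ∧ (0 : ℤ) ≤ d - parseCount (↑X) w :=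
    fun i w hw => ⟨(mem_wordsOfLength.1 hw).2,
      sub_nonneg.2 (by exact_mod_cast hd.1 w (mem_wordsOfLength.1 hw).2)⟩
  refine ⟨fun hstrong => ?_, fun hweak => ?_, fun hneutral => ?_⟩ <;> rw [hcard]
  · exact le_add_of_nonneg_right <| Finset.sum_nonneg fun i _ => Finset.sum_nonneg fun w hw =>
      mul_nonneg (hstrong w (hweight i w hw).1) (hweight i w hw).2
  · exact add_le_of_nonpos_right <| Finset.sum_nonpos fun i _ => Finset.sum_nonpos fun w hw =>
      mul_nonpos_of_nonpos_of_nonneg (hweak w (hweight i w hw).1) (hweight i w hw).2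
  · rw [add_eq_left]
    exact Finset.sum_eq_zero fun i _ => Finset.sum_eq_zero fun w hw =>
      mul_eq_zero_of_left (hneutral w (hweight i w hw).1) _

end Paper
end

section
/- Let S be a biextendable set of words and w ∈ S. If the set AwA ∩ S = {awb | a,b ∈ A, awb ∈ S}, viewed in the free group F_A, is a basis of the subgroup it generates (i.e., is a free and independent set), then the extension graph G(w) is acyclic. -/
/-!
Choose a potential `φ` on the vertices of `G(w)` with `φ(a) = a w` and `φ(b) = b⁻¹`, so that the
edge from `a` to `b` has value `φ(a) φ(b)⁻¹ = a w b`. Along any walk the edge values telescope,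
so an edge `e` with a second path between its endpoints expresses `e` as a product of the other
edges' values. Independence lifts this relation to the free group on `A w A ∩ S`, where counting
occurrences of the generator of `e` gives `1 = 0`. Hence every edge is a bridge.
-/

namespace SimpleGraph

variable {V H : Type*} [Group H] {G : SimpleGraph V}

def dartValue (φ : V → H) (d : G.Dart) : H := φ d.fst * (φ d.snd)⁻¹

lemma dartValue_symm (φ : V → H) (d : G.Dart) : dartValue φ d.symm = (dartValue φ d)⁻¹ := by
  simp [dartValue]

lemma prod_map_dartValue_darts (φ : V → H) {u v : V} (p : G.Walk u v) :
    (p.darts.map (dartValue φ)).prod = φ u * (φ v)⁻¹ := by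
  induction p with
  | nil => simp
  | cons h p ih => simp [ih, dartValue]

variable {φ : V → H} {X : Set H}

open Classical in
noncomputable def dartGen (hX : ∀ d : G.Dart, dartValue φ d ∈ X ∨ (dartValue φ d)⁻¹ ∈ X)
    (d : G.Dart) : FreeGroup X :=
  if h : dartValue φ d ∈ X then .of ⟨_, h⟩ else (.of ⟨_, (hX d).resolve_left h⟩)⁻¹

lemma lift_dartGen (hX : ∀ d : G.Dart, dartValue φ d ∈ X ∨ (dartValue φ d)⁻¹ ∈ X)
    (d : G.Dart) : FreeGroup.lift Subtype.val (dartGen hX d) = dartValue φ d := by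
  unfold dartGen
  split_ifs <;> simp

lemma lift_mulSingle_dartGen_eq_one {M : Type*} [Group M] [DecidableEq X]
    (hX : ∀ d : G.Dart, dartValue φ d ∈ X ∨ (dartValue φ d)⁻¹ ∈ X) (τ : X) (m : M)
    (d : G.Dart) (hτ : (τ : H) ≠ dartValue φ d) (hτ' : (τ : H) ≠ (dartValue φ d)⁻¹) :
    FreeGroup.lift (Pi.mulSingle τ m) (dartGen hX d) = 1 := by
  unfold dartGen
  split_ifs
  · simp [Subtype.ext_iff, Ne.symm hτ]
  · simp [Subtype.ext_iff, Ne.symm hτ']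

theorem isAcyclic_of_injective_dartValue
    (hfree : Function.Injective (FreeGroup.lift (Subtype.val : X → H)))
    (hX : ∀ d : G.Dart, dartValue φ d ∈ X ∨ (dartValue φ d)⁻¹ ∈ X)
    (hinj : Function.Injective (dartValue φ (G := G))) : G.IsAcyclic := by
  classical
  refine isAcyclic_iff_forall_adj_isBridge.2 fun u v huv => ?_
  wlog hmem : dartValue φ ⟨(u, v), huv⟩ ∈ X generalizing u v
  · rw [Sym2.eq_swap]
    refine this v u huv.symm ?_
    simpa [← dartValue_symm] using (hX ⟨(u, v), huv⟩).resolve_left hmem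
  refine isBridge_iff_forall_walk_mem_edges.2 fun p => ?_
  by_contra hp
  set d₀ : G.Dart := ⟨(u, v), huv⟩
  set τ : X := ⟨_, hmem⟩
  set count := FreeGroup.lift (Pi.mulSingle τ (Multiplicative.ofAdd (1 : ℤ)))
  have hrel : dartGen hX d₀ = (p.darts.map (dartGen hX)).prod := hfree <| by
    simp only [map_list_prod, List.map_map, Function.comp_def, lift_dartGen,
      prod_map_dartValue_darts]
    rfl
  have hcount_d₀ : count (dartGen hX d₀) ≠ 1 := by simp [count, dartGen, hmem, τ]
  have hcount_p : count (p.darts.map (dartGen hX)).prod = 1 := by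
    rw [map_list_prod, List.map_map]
    refine List.prod_eq_one fun _ hx => ?_
    obtain ⟨d, hd, rfl⟩ := List.mem_map.1 hx
    have hedge : d.edge ≠ s(u, v) := fun h => hp (h ▸ List.mem_map_of_mem hd)
    refine lift_mulSingle_dartGen_eq_one hX τ _ d (fun h => hedge ?_) (fun h => hedge ?_)
    · rw [← hinj h]; rfl
    · rw [← dartValue_symm] at h
      rw [← Dart.edge_symm, ← hinj h]; rfl
  exact hcount_d₀ (hrel ▸ hcount_p)

end SimpleGraph

namespace Paper

open SimpleGraph

variable {A : Type*}

lemma toFG_append (u v : List A) : toFG (u ++ v) = toFG u * toFG v := by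
  simp [toFG]

lemma toWord_toFG [DecidableEq A] (u : List A) : (toFG u).toWord = u.map fun a => (a, true) := by
  have hmk : toFG u = FreeGroup.mk (u.map fun a => (a, true)) := by
    induction u with
    | nil => rfl
    | cons a u ih => rw [toFG, List.map_cons, List.prod_cons, ← toFG, ih]; rfl
  have hred : FreeGroup.IsReduced (u.map fun a => (a, true)) := by
    simpa [FreeGroup.IsReduced, List.isChain_map] using
      (List.pairwise_of_forall (l := u) fun _ _ => trivial).isChain
  rw [hmk, FreeGroup.toWord_mk, hred.reduce_eq]

lemma toFG_injective : Function.Injective (toFG : List A → FreeGroup A) := by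
  classical
  have hletter : Function.Injective fun a : A => (a, true) := fun _ _ h => congrArg Prod.fst h
  intro u v h
  refine List.map_injective_iff.2 hletter ?_
  rw [← toWord_toFG, ← toWord_toFG, h]

lemma toFG_ne_inv_toFG {u : List A} (hu : u ≠ []) (v : List A) : toFG u ≠ (toFG v)⁻¹ := by
  intro h
  have : toFG (u ++ v) = toFG [] := by rw [toFG_append, h, inv_mul_cancel]; rfl
  exact hu (List.append_eq_nil_iff.1 (toFG_injective this)).1

lemma toFG_cons_append_singleton (a b : A) (w : List A) :
    toFG (a :: (w ++ [b])) = .of a * toFG w * .of b := by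
  simp [toFG, mul_assoc]

def extGenerators (S : Set (List A)) (w : List A) : Set (FreeGroup A) :=
  toFG '' {u ∈ S | ∃ a b : A, u = a :: (w ++ [b])}

def extPotential (S : Set (List A)) (w : List A) (v : ExtVertex S w) : FreeGroup A :=
  Sum.elim (fun a => .of a * toFG w) (fun b => (.of b)⁻¹) v.1

variable {S : Set (List A)} {w : List A}

lemma dartValue_extPotential (d : (extGraph S w).Dart) :
    ∃ a b, a :: (w ++ [b]) ∈ S ∧
      (d.fst.1 = .inl a ∧ d.snd.1 = .inr b ∧
          dartValue (extPotential S w) d = toFG (a :: (w ++ [b])) ∨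
        d.fst.1 = .inr b ∧ d.snd.1 = .inl a ∧
          dartValue (extPotential S w) d = (toFG (a :: (w ++ [b])))⁻¹) := by
  rcases d.adj with ⟨a, b, h₁, h₂, hab⟩ | ⟨a, b, h₁, h₂, hab⟩
  · refine ⟨a, b, hab, .inl ⟨h₁, h₂, ?_⟩⟩
    simp [dartValue, extPotential, h₁, h₂, toFG_cons_append_singleton]
  · refine ⟨a, b, hab, .inr ⟨h₁, h₂, ?_⟩⟩
    simp [dartValue, extPotential, h₁, h₂, toFG_cons_append_singleton, mul_assoc]

lemma dartValue_extPotential_mem (d : (extGraph S w).Dart) :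
    dartValue (extPotential S w) d ∈ extGenerators S w ∨
      (dartValue (extPotential S w) d)⁻¹ ∈ extGenerators S w := by
  obtain ⟨a, b, hab, ⟨-, -, hd⟩ | ⟨-, -, hd⟩⟩ := dartValue_extPotential d
  · exact .inl ⟨_, ⟨hab, a, b, rfl⟩, hd.symm⟩
  · exact .inr ⟨_, ⟨hab, a, b, rfl⟩, by rw [hd, inv_inv]⟩

lemma dartValue_extPotential_injective :
    Function.Injective (dartValue (extPotential S w) (G := extGraph S w)) := by
  intro d d' h
  have hdart (h₁ : d.fst.1 = d'.fst.1) (h₂ : d.snd.1 = d'.snd.1) : d = d' :=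
    Dart.ext _ _ (Prod.ext (Subtype.ext h₁) (Subtype.ext h₂))
  obtain ⟨a, b, -, ⟨h₁, h₂, hd⟩ | ⟨h₁, h₂, hd⟩⟩ := dartValue_extPotential d <;>
  obtain ⟨a', b', -, ⟨h₁', h₂', hd'⟩ | ⟨h₁', h₂', hd'⟩⟩ := dartValue_extPotential d' <;>
  rw [hd, hd'] at h
  · obtain ⟨rfl, rfl⟩ : a = a' ∧ b = b' := by simpa using toFG_injective h
    exact hdart (h₁.trans h₁'.symm) (h₂.trans h₂'.symm)
  · exact absurd h (toFG_ne_inv_toFG (List.cons_ne_nil _ _) _)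
  · exact absurd h.symm (toFG_ne_inv_toFG (List.cons_ne_nil _ _) _)
  · obtain ⟨rfl, rfl⟩ : a = a' ∧ b = b' := by simpa using toFG_injective (inv_injective h)
    exact hdart (h₁.trans h₁'.symm) (h₂.trans h₂'.symm)

theorem independent_extensions_implies_acyclic_general {A : Type*} (S : Set (List A)) (w : List A)
    (hind : Function.Injective (FreeGroup.lift
      (Subtype.val : (toFG '' {u ∈ S | ∃ a b : A, u = a :: (w ++ [b])}) → FreeGroup A))) :
    (extGraph S w).IsAcyclic :=
  isAcyclic_of_injective_dartValue (X := extGenerators S w) hind dartValue_extPotential_mem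
    dartValue_extPotential_injective

/-- Let `S` be a biextendable set and `w ∈ S`. If the set
`A w A ∩ S`, viewed in the free group `F_A`, is free and independent (i.e. a basis of the
subgroup it generates), then the extension graph `G(w)` is acyclic. -/
theorem independent_extensions_implies_acyclic {A : Type*} (S : Set (List A))
    (hbi : ∀ w ∈ S, (Eext S w).Nonempty) (w : List A) (hw : w ∈ S)
    (hind : Function.Injective (FreeGroup.lift
      (Subtype.val : (toFG '' {u ∈ S | ∃ a b : A, u = a :: (w ++ [b])}) → FreeGroup A))) :
    (extGraph S w).IsAcyclic :=
  independent_extensions_implies_acyclic_general S w hind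

end Paper
end

section
/- Let A = {a,b,c} and let S be the set of factors of words in a*{bc, bcbc}a* (i.e., factors of words of the form a^i bc a^j and a^i bcbc a^j for i,j ≥ 0). Then S is neutral: e(w) = ℓ(w) + r(w) − 1 for every w ∈ S; but S is not acyclic, since the extension graph G(ε) of the empty word contains a cycle. -/
/-!
In a factorial biextendable set, `L(w)` and `R(w)` are the two projections of `E(w)`. When
one of them is a single letter, `E(w)` is in bijection with the other one, so
`e(w) = ℓ(w) + r(w) - 1` holds for free and only bispecial words have to be checked.

Every two-letter factor of a word of `S` is one of `aa, ab, bc, cb, ca`, and no word of `S`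
contains `cab` or `cbcb` as a subsequence, because the generators `aⁱbcaʲ` and `aⁱbcbcaʲ`
do not. These constraints leave `ε`, `bc` and `aⁿ` as the only bispecial words. For `bc` and
`aⁿ` the extension set is `{(a,a), (a,b), (c,a)}`, a path; for `ε` it is the set of the five
two-letter factors, which satisfies `5 = 3 + 3 - 1` but contains the square
`{a, c} × {a, b}`, a 4-cycle of `G(ε)`.
-/

namespace Paper

variable {A : Type*}

/-- The set of factors of `a* {bc, bcbc} a*` over `A = {a, b, c}` encoded as
`a = 0`, `b = 1`, `c = 2` in `Fin 3`. -/
def exampleS : Set (List (Fin 3)) :=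
  {w | ∃ i j : ℕ,
    w <:+: (List.replicate i 0 ++ [1, 2] ++ List.replicate j 0) ∨
    w <:+: (List.replicate i 0 ++ [1, 2, 1, 2] ++ List.replicate j 0)}

open List

theorem _root_.List.IsChain.replicate_append {α : Type*} {R : α → α → Prop} {a : α}
    {l : List α} (hl : l.IsChain R) (ha : R a a) (hhead : ∀ y ∈ l.head?, R a y) (n : ℕ) :
    (replicate n a ++ l).IsChain R := by
  induction n with
  | zero => exact hl
  | succ n ih =>
    refine ih.cons fun y hy => ?_
    cases n with
    | zero => exact hhead y hy
    | succ n => exact Option.some.inj hy ▸ ha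

theorem _root_.List.IsChain.append_replicate {α : Type*} {R : α → α → Prop} {a : α}
    {l : List α} (hl : l.IsChain R) (ha : R a a) (hlast : ∀ x ∈ l.getLast?, R x a) (n : ℕ) :
    (l ++ replicate n a).IsChain R := by
  rw [← isChain_reverse, reverse_append, reverse_replicate]
  exact (isChain_reverse.mpr hl).replicate_append ha (by simpa using hlast) n

theorem _root_.List.Sublist.of_cons_sublist_replicate_append {α : Type*} {a x : α}
    {l r : List α} (hx : x ≠ a) {n : ℕ} (h : x :: l <+ replicate n a ++ r) : x :: l <+ r := by
  induction n with
  | zero => exact h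
  | succ n ih => exact ih (by simpa [replicate_succ, sublist_cons_iff, hx] using h)

theorem _root_.List.Sublist.of_concat_sublist_append_replicate {α : Type*} {a x : α}
    {l r : List α} (hx : x ≠ a) {n : ℕ} (h : l ++ [x] <+ r ++ replicate n a) :
    l ++ [x] <+ r := by
  rw [← reverse_sublist] at h ⊢
  simp only [reverse_append, reverse_replicate, reverse_singleton, singleton_append] at h ⊢
  exact h.of_cons_sublist_replicate_append hx

theorem _root_.List.IsInfix.exists_cons_append_singleton {α : Type*} {w l : List α}
    (h : w <:+: l) (a b : α) : ∃ x y, x :: (w ++ [y]) <:+: a :: (l ++ [b]) := by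
  obtain ⟨s, t, rfl⟩ := h
  rcases eq_nil_or_concat' s with rfl | ⟨s, x, rfl⟩ <;> rcases t with _ | ⟨y, t⟩
  · exact ⟨a, b, by simp⟩
  · exact ⟨a, y, [], t ++ [b], by simp⟩
  · exact ⟨x, b, a :: s, [], by simp⟩
  · exact ⟨x, y, a :: s, t ++ [b], by simp⟩

theorem _root_.List.eq_replicate_or_exists_replicate_append_cons_ne {α : Type*} (a : α) :
    ∀ l : List α,
      (∃ n, l = replicate n a) ∨ ∃ n y r, y ≠ a ∧ l = replicate n a ++ y :: r
  | [] => .inl ⟨0, rfl⟩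
  | x :: l => by
    by_cases hx : x = a
    · subst hx
      rcases eq_replicate_or_exists_replicate_append_cons_ne x l with
        ⟨n, rfl⟩ | ⟨n, y, r, hy, rfl⟩
      · exact .inl ⟨n + 1, rfl⟩
      · exact .inr ⟨n + 1, y, r, hy, rfl⟩
    · exact .inr ⟨0, x, l, hx, rfl⟩

theorem _root_.Set.ncard_image_snd_of_subsingleton_image_fst {α β : Type*} {E : Set (α × β)}
    (h : (Prod.fst '' E).Subsingleton) : (Prod.snd '' E).ncard = E.ncard :=
  Set.InjOn.ncard_image fun _ hp _ hq hpq =>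
    Prod.ext (h (Set.mem_image_of_mem _ hp) (Set.mem_image_of_mem _ hq)) hpq

theorem _root_.Set.ncard_image_fst_of_subsingleton_image_snd {α β : Type*} {E : Set (α × β)}
    (h : (Prod.snd '' E).Subsingleton) : (Prod.fst '' E).ncard = E.ncard :=
  Set.InjOn.ncard_image fun _ hp _ hq hpq =>
    Prod.ext hpq (h (Set.mem_image_of_mem _ hp) (Set.mem_image_of_mem _ hq))

def Biextendable (S : Set (List A)) : Prop := ∀ w ∈ S, ∃ x y, x :: (w ++ [y]) ∈ S

def IsBispecial (S : Set (List A)) (w : List A) : Prop :=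
  (Lext S w).Nontrivial ∧ (Rext S w).Nontrivial

def NeutralAt (S : Set (List A)) (w : List A) : Prop :=
  ((Eext S w).ncard : ℤ) = (Lext S w).ncard + (Rext S w).ncard - 1

section Extensions

variable {S : Set (List A)} {w : List A}

theorem mem_Eext {x y : A} : (x, y) ∈ Eext S w ↔ x :: (w ++ [y]) ∈ S := Iff.rfl

theorem Lext_eq_image_fst (hS : Factorial S) (hB : Biextendable S) :
    Lext S w = Prod.fst '' Eext S w := by
  ext x
  refine ⟨fun hx => ?_, ?_⟩
  · obtain ⟨z, y, h⟩ := hB _ hx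
    exact ⟨(x, y), hS _ h _ ⟨[z], [], by simp⟩, rfl⟩
  · rintro ⟨⟨x, y⟩, h, rfl⟩
    exact hS _ h _ ⟨[], [y], by simp⟩

theorem Rext_eq_image_snd (hS : Factorial S) (hB : Biextendable S) :
    Rext S w = Prod.snd '' Eext S w := by
  ext y
  refine ⟨fun hy => ?_, ?_⟩
  · obtain ⟨x, z, h⟩ := hB _ hy
    exact ⟨(x, y), hS _ h _ ⟨[], [z], by simp⟩, rfl⟩
  · rintro ⟨⟨x, y⟩, h, rfl⟩
    exact hS _ h _ ⟨[x], [], by simp⟩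

theorem neutralAt_of_not_isBispecial (hS : Factorial S) (hB : Biextendable S) (hw : w ∈ S)
    (h : ¬ IsBispecial S w) : NeutralAt S w := by
  obtain ⟨x, y, hxy⟩ := hB w hw
  have hE : (x, y) ∈ Eext S w := hxy
  rw [NeutralAt, Lext_eq_image_fst hS hB, Rext_eq_image_snd hS hB]
  rw [IsBispecial, Lext_eq_image_fst hS hB, Rext_eq_image_snd hS hB, not_and_or,
    Set.not_nontrivial_iff, Set.not_nontrivial_iff] at h
  rcases h with h | h
  · rw [h.eq_singleton_of_mem (Set.mem_image_of_mem _ hE), Set.ncard_singleton,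
      Set.ncard_image_snd_of_subsingleton_image_fst h]
    ring
  · rw [h.eq_singleton_of_mem (Set.mem_image_of_mem _ hE), Set.ncard_singleton,
      Set.ncard_image_fst_of_subsingleton_image_snd h]
    ring

theorem neutralAt_of_Eext_eq [DecidableEq A] (hS : Factorial S) (hB : Biextendable S)
    {e : Finset (A × A)} (h : Eext S w = e)
    (he : (e.card : ℤ) = (e.image Prod.fst).card + (e.image Prod.snd).card - 1) :
    NeutralAt S w := by
  rwa [NeutralAt, Lext_eq_image_fst hS hB, Rext_eq_image_snd hS hB, h, ← Finset.coe_image,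
    ← Finset.coe_image, Set.ncard_coe_finset, Set.ncard_coe_finset, Set.ncard_coe_finset]

theorem not_isAcyclic_extGraph_of_mem_Eext (hS : Factorial S) {a a' b b' : A} (ha : a ≠ a')
    (hb : b ≠ b') (h₁ : (a, b) ∈ Eext S w) (h₂ : (a', b) ∈ Eext S w)
    (h₃ : (a', b') ∈ Eext S w) (h₄ : (a, b') ∈ Eext S w) : ¬ (extGraph S w).IsAcyclic := by
  have mem_L {x y : A} (h : (x, y) ∈ Eext S w) : x ∈ Lext S w := hS _ h _ ⟨[], [y], by simp⟩
  have mem_R {x y : A} (h : (x, y) ∈ Eext S w) : y ∈ Rext S w := hS _ h _ ⟨[x], [], by simp⟩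
  let l : ExtVertex S w := ⟨.inl a, mem_L h₁⟩
  let l' : ExtVertex S w := ⟨.inl a', mem_L h₂⟩
  let r : ExtVertex S w := ⟨.inr b, mem_R h₁⟩
  let r' : ExtVertex S w := ⟨.inr b', mem_R h₃⟩
  have e₁ : (extGraph S w).Adj l r := .inl ⟨a, b, rfl, rfl, h₁⟩
  have e₂ : (extGraph S w).Adj r l' := .inr ⟨a', b, rfl, rfl, h₂⟩
  have e₃ : (extGraph S w).Adj l' r' := .inl ⟨a', b', rfl, rfl, h₃⟩
  have e₄ : (extGraph S w).Adj r' l := .inr ⟨a, b', rfl, rfl, h₄⟩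
  have ne_of_val_ne {u v : ExtVertex S w} (h : u.1 ≠ v.1) : u ≠ v := fun e => h (congrArg _ e)
  intro hacyc
  refine hacyc (.cons e₁ (.cons e₂ (.cons e₃ (.cons e₄ .nil)))) ?_
  rw [SimpleGraph.Walk.cons_isCycle_iff, SimpleGraph.Walk.isPath_def]
  simp only [SimpleGraph.Walk.support_cons, SimpleGraph.Walk.support_nil,
    SimpleGraph.Walk.edges_cons, SimpleGraph.Walk.edges_nil]
  refine ⟨List.Nodup.of_map Subtype.val ?_, ?_⟩
  · show ([.inr b, .inl a', .inr b', .inl a] : List (A ⊕ A)).Nodup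
    simp [hb, ha.symm]
  · have hll' : l ≠ l' := ne_of_val_ne (Sum.inl_injective.ne ha)
    have hrr' : r ≠ r' := ne_of_val_ne (Sum.inr_injective.ne hb)
    have hlr : l ≠ r := ne_of_val_ne Sum.inl_ne_inr
    have hlr' : l ≠ r' := ne_of_val_ne Sum.inl_ne_inr
    simp [hll', hrr', hlr, hlr']

end Extensions

def twoFactors : Finset (Fin 3 × Fin 3) := {(0, 0), (0, 1), (1, 2), (2, 1), (2, 0)}

abbrev Follows (x y : Fin 3) : Prop := (x, y) ∈ twoFactors

namespace exampleS

variable {w : List (Fin 3)}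

theorem factorial : Factorial exampleS := by
  rintro w ⟨i, j, h | h⟩ u hu
  exacts [⟨i, j, .inl (hu.trans h)⟩, ⟨i, j, .inr (hu.trans h)⟩]

theorem biextendable : Biextendable exampleS := by
  rintro w ⟨i, j, h | h⟩ <;> obtain ⟨x, y, hxy⟩ := h.exists_cons_append_singleton 0 0
  · exact ⟨x, y, i + 1, j + 1, .inl (by rw [replicate_succ, replicate_succ']; simpa using hxy)⟩
  · exact ⟨x, y, i + 1, j + 1, .inr (by rw [replicate_succ, replicate_succ']; simpa using hxy)⟩

theorem isChain_follows_of_mem (hw : w ∈ exampleS) : w.IsChain Follows := by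
  obtain ⟨i, j, h | h⟩ := hw <;> refine IsChain.infix ?_ h <;>
    refine IsChain.append_replicate (IsChain.replicate_append ?_ ?_ ?_ _) ?_ ?_ _ <;>
    simp [Follows, twoFactors]

theorem not_sublist_of_mem (hw : w ∈ exampleS) :
    ¬ [2, 0, 1] <+ w ∧ ¬ [2, 1, 2, 1] <+ w := by
  have key (m X : List (Fin 3)) (hX : ¬ 2 :: m ++ [1] <+ X) (i j : ℕ) :
      ¬ 2 :: m ++ [1] <+ replicate i 0 ++ X ++ replicate j 0 :=
    fun hs => hX <|
      (hs.of_concat_sublist_append_replicate (by decide)).of_cons_sublist_replicate_append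
        (by decide)
  obtain ⟨i, j, h | h⟩ := hw <;>
    exact ⟨fun hs => key [0] _ (by decide) i j (hs.trans h.sublist),
      fun hs => key [1, 2] _ (by decide) i j (hs.trans h.sublist)⟩

theorem follows_of_mem {l₁ l₂ : List (Fin 3)} {x y : Fin 3}
    (h : l₁ ++ x :: y :: l₂ ∈ exampleS) : Follows x y :=
  isChain_pair.mp ((isChain_follows_of_mem h).infix ⟨l₁, l₂, by simp⟩)

theorem subsingleton_Lext_two_cons : (Lext exampleS (2 :: w)).Subsingleton := by
  refine Set.subsingleton_of_forall_eq 1 fun x hx => ?_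
  have := follows_of_mem (l₁ := []) hx
  fin_cases x <;> revert this <;> decide

theorem subsingleton_Rext_append_one : (Rext exampleS (w ++ [1])).Subsingleton := by
  refine Set.subsingleton_of_forall_eq 2 fun y hy => ?_
  have : Follows 1 y := follows_of_mem (l₁ := w) (l₂ := []) (by simpa [Rext] using hy)
  fin_cases y <;> revert this <;> decide

theorem subsingleton_Lext_replicate_succ_append_one (n : ℕ) :
    (Lext exampleS (replicate (n + 1) 0 ++ 1 :: w)).Subsingleton := by
  refine Set.subsingleton_of_forall_eq 0 fun x hx => ?_
  have := follows_of_mem (l₁ := []) hx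
  have := (not_sublist_of_mem hx).1
  fin_cases x <;> simp_all [Follows, twoFactors, replicate_succ]

theorem subsingleton_Rext_two_cons_replicate_succ (n : ℕ) :
    (Rext exampleS (w ++ 2 :: replicate (n + 1) 0)).Subsingleton := by
  refine Set.subsingleton_of_forall_eq 0 fun y hy => ?_
  have : Follows 0 y := follows_of_mem (l₁ := w ++ 2 :: replicate n 0) (l₂ := [])
    (by simpa [Rext, replicate_succ'] using hy)
  have := (not_sublist_of_mem hy).1
  fin_cases y <;> simp_all [Follows, twoFactors, replicate_succ]

theorem subsingleton_Lext_one_two_one_cons : (Lext exampleS (1 :: 2 :: 1 :: w)).Subsingleton := by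
  refine Set.subsingleton_of_forall_eq 0 fun x hx => ?_
  have := follows_of_mem (l₁ := []) hx
  have := (not_sublist_of_mem hx).2
  fin_cases x <;> simp_all [Follows, twoFactors]

theorem eq_replicate_of_two_zero_cons_mem {v : List (Fin 3)} (hv : 2 :: 0 :: v ∈ exampleS) :
    ∃ k, v = replicate k 0 := by
  rcases eq_replicate_or_exists_replicate_append_cons_ne 0 v with h | ⟨n, y, r, hy, rfl⟩
  · exact h
  have : Follows 0 y := follows_of_mem (l₁ := 2 :: replicate n 0) (l₂ := r)
    (by rwa [← cons_append, ← replicate_succ, replicate_succ', append_assoc,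
      singleton_append] at hv)
  have := (not_sublist_of_mem hv).1
  fin_cases y <;> simp_all [Follows, twoFactors]

theorem eq_of_isBispecial (hw : w ∈ exampleS) (hb : IsBispecial exampleS w) :
    w = [] ∨ w = [1, 2] ∨ ∃ n, w = replicate (n + 1) 0 := by
  obtain ⟨hL, hR⟩ := hb
  rcases eq_replicate_or_exists_replicate_append_cons_ne 0 w with
    ⟨_ | n, rfl⟩ | ⟨_ | n, y, r, hy, rfl⟩
  · exact .inl rfl
  · exact .inr (.inr ⟨n, rfl⟩)
  · fin_cases y
    · exact absurd rfl hy
    · rcases r with _ | ⟨z, r⟩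
      · exact absurd (subsingleton_Rext_append_one (w := [])) hR.not_subsingleton
      obtain rfl : z = 2 := by
        have := follows_of_mem (l₁ := []) hw
        fin_cases z <;> revert this <;> decide
      rcases r with _ | ⟨u, r⟩
      · exact .inr (.inl rfl)
      fin_cases u
      · obtain ⟨k, rfl⟩ :=
          eq_replicate_of_two_zero_cons_mem (factorial _ hw _ (suffix_cons _ _).isInfix)
        exact absurd (subsingleton_Rext_two_cons_replicate_succ (w := [1]) k) hR.not_subsingleton
      · exact absurd subsingleton_Lext_one_two_one_cons hL.not_subsingleton
      · exact absurd (follows_of_mem (l₁ := [1]) hw) (by decide)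
    · exact absurd subsingleton_Lext_two_cons hL.not_subsingleton
  · obtain rfl : y = 1 := by
      have : Follows 0 y := follows_of_mem (l₁ := replicate n 0) (by
        rwa [replicate_succ', append_assoc, singleton_append] at hw)
      fin_cases y <;> revert this hy <;> decide
    exact absurd (subsingleton_Lext_replicate_succ_append_one n) hL.not_subsingleton

theorem replicate_mem (n : ℕ) : replicate n 0 ∈ exampleS :=
  ⟨n, 0, .inl ⟨[], [1, 2], by simp⟩⟩

theorem replicate_append_one_mem (n : ℕ) : replicate n 0 ++ [1] ∈ exampleS :=
  ⟨n, 0, .inl ⟨[], [2], by simp⟩⟩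

theorem two_cons_replicate_mem (n : ℕ) : 2 :: replicate n 0 ∈ exampleS :=
  ⟨0, n, .inl ⟨[1], [], by simp⟩⟩

theorem Eext_nil : Eext exampleS [] = twoFactors := by
  ext ⟨x, y⟩
  refine ⟨fun h => follows_of_mem (l₁ := []) (l₂ := []) h, fun h => ?_⟩
  fin_cases x <;> fin_cases y <;>
    first | exact ⟨2, 2, by decide⟩ | exact absurd h (by decide)

theorem Eext_one_two :
    Eext exampleS [1, 2] = ({(0, 0), (0, 1), (2, 0)} : Finset (Fin 3 × Fin 3)) := by
  ext ⟨x, y⟩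
  refine ⟨fun h => ?_, fun h => ?_⟩
  · have hx : Follows x 1 := follows_of_mem (l₁ := []) h
    have hy : Follows 2 y := follows_of_mem (l₁ := [x, 1]) (l₂ := []) h
    have hxy := (not_sublist_of_mem h).2
    fin_cases x <;> fin_cases y <;> revert hx hy hxy <;> decide
  · fin_cases x <;> fin_cases y <;>
      first | exact ⟨2, 2, by decide⟩ | exact absurd h (by decide)

theorem Eext_replicate_succ (n : ℕ) :
    Eext exampleS (replicate (n + 1) 0) = ({(0, 0), (0, 1), (2, 0)} : Finset (Fin 3 × Fin 3)) := by
  ext ⟨x, y⟩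
  refine ⟨fun h => ?_, fun h => ?_⟩
  · rw [mem_Eext] at h
    have hx : Follows x 0 := follows_of_mem (l₁ := []) h
    have hy : Follows 0 y := follows_of_mem (l₁ := x :: replicate n 0) (l₂ := [])
      (by rwa [replicate_succ', append_assoc, singleton_append] at h)
    have hxy := (not_sublist_of_mem h).1
    fin_cases x <;> fin_cases y <;> simp_all [Follows, twoFactors, replicate_succ]
  · simp only [Finset.coe_insert, Finset.coe_singleton, Set.mem_insert_iff, Set.mem_singleton_iff,
      Prod.mk.injEq] at h
    rcases h with ⟨rfl, rfl⟩ | ⟨rfl, rfl⟩ | ⟨rfl, rfl⟩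
    · rw [mem_Eext, ← replicate_succ', ← replicate_succ]
      exact replicate_mem _
    · rw [mem_Eext, ← cons_append, ← replicate_succ]
      exact replicate_append_one_mem _
    · rw [mem_Eext, ← replicate_succ']
      exact two_cons_replicate_mem _

theorem not_isAcyclic_extGraph_nil : ¬ (extGraph exampleS []).IsAcyclic := by
  refine not_isAcyclic_extGraph_of_mem_Eext factorial (a := 0) (a' := 2) (b := 0) (b' := 1)
    (by decide) (by decide) ?_ ?_ ?_ ?_ <;> rw [Eext_nil] <;> decide

end exampleS

/-- The set `S` of factors of `a* {bc, bcbc} a*` is neutral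
(`e(w) = ℓ(w) + r(w) - 1` for every `w ∈ S`) but not acyclic: the extension graph of the
empty word contains a cycle. -/
theorem exampleS_neutral_not_acyclic :
    (∀ w ∈ exampleS, ((Eext exampleS w).ncard : ℤ)
        = (Lext exampleS w).ncard + (Rext exampleS w).ncard - 1) ∧
    ¬ (extGraph exampleS ([] : List (Fin 3))).IsAcyclic := by
  refine ⟨fun w hw => ?_, exampleS.not_isAcyclic_extGraph_nil⟩
  have hS := exampleS.factorial
  have hB := exampleS.biextendable
  by_cases hbisp : IsBispecial exampleS w
  · rcases exampleS.eq_of_isBispecial hw hbisp with rfl | rfl | ⟨n, rfl⟩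
    · exact neutralAt_of_Eext_eq hS hB exampleS.Eext_nil (by decide)
    · exact neutralAt_of_Eext_eq hS hB exampleS.Eext_one_two (by decide)
    · exact neutralAt_of_Eext_eq hS hB (exampleS.Eext_replicate_succ n) (by decide)
  · exact neutralAt_of_not_isBispecial hS hB hw hbisp

end Paper
end
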